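/- arXiv:1911.07542 — 8 statements merged into one kernel-verified Lean document; each statement's English description precedes it below -/
import Mathlib

section
/- Let C be an [n, k] linear code over F_q with weight enumerator A(z) = Σ_i A_i z^i, and let B(z) be the weight enumerator of the dual code C^⊥. Then B(z) = q^{-k} (1 + (q-1)z)^n · A((1-z)/(1+(q-1)z)). -/
open Polynomial Finset

private lemma addChar_map_sum {F M : Type} [AddCommMonoid F] [CommMonoid M] (χ : AddChar F M)
    {ι : Type} (s : Finset ι) (g : ι → F) :
    χ (∑ j ∈ s, g j) = ∏ j ∈ s, χ (g j) := by
  classical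
  induction s using Finset.cons_induction with
  | empty => simp
  | cons a s ha ih => rw [Finset.sum_cons, Finset.prod_cons, AddChar.map_add_eq_mul, ih]

private lemma fib_sum {n : ℕ} {F : Type} [Fintype F] [DecidableEq F] [Zero F]
    (S : Finset (Fin n → F)) {R : Type} [CommSemiring R] (t : R) :
    ∑ i ∈ Finset.range (n + 1),
      ((S.filter (fun x => hammingNorm x = i)).card : R) * t ^ i
      = ∑ x ∈ S, t ^ hammingNorm x := by
  have hmaps : ∀ x ∈ S, hammingNorm x ∈ Finset.range (n + 1) := fun x _ =>
    Finset.mem_range.mpr (Nat.lt_succ_of_le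
      (hammingNorm_le_card_fintype.trans_eq (Fintype.card_fin n)))
  rw [← Finset.sum_fiberwise_of_maps_to hmaps (fun x => t ^ hammingNorm x)]
  refine Finset.sum_congr rfl fun i _ => ?_
  rw [Finset.sum_congr rfl (fun x hx => by rw [(Finset.mem_filter.mp hx).2]),
    Finset.sum_const, nsmul_eq_mul]

theorem stmt_3 (q n k : ℕ) (F : Type) [Field F] [Fintype F] [DecidableEq F]
    (hF : Fintype.card F = q)
    (C : Submodule F (Fin n → F)) (hk : Module.finrank F C = k)
    (z : ℝ) (hz : 1 + (q - 1 : ℝ) * z ≠ 0) :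
    (∑ i ∈ Finset.range (n + 1),
        (Set.ncard {x : Fin n → F |
            (∀ y ∈ C, ∑ j, x j * y j = 0) ∧ hammingNorm x = i} : ℝ) * z ^ i)
      = ((q : ℝ) ^ k)⁻¹ * (1 + (q - 1 : ℝ) * z) ^ n *
          ∑ i ∈ Finset.range (n + 1),
            (Set.ncard {x : Fin n → F | x ∈ C ∧ hammingNorm x = i} : ℝ) *
              ((1 - z) / (1 + (q - 1 : ℝ) * z)) ^ i := by
  classical
  -- basic numerics
  have hq1 : 1 ≤ q := hF ▸ Fintype.card_pos
  have hq0 : (q : ℝ) ≠ 0 := Nat.cast_ne_zero.mpr (by omega)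
  have hqk : ((q : ℝ) ^ k) ≠ 0 := pow_ne_zero _ hq0
  -- the character
  set χ : AddChar F ℂ := AddChar.FiniteField.primitiveChar_to_Complex F with hχ
  have hprim := AddChar.FiniteField.primitiveChar_to_Complex_isPrimitive F
  have hsum0 : ∀ b : F, b ≠ 0 → ∑ x : F, χ (x * b) = 0 := by
    intro b hb
    have h := AddChar.sum_mulShift b hprim
    rw [if_neg hb] at h
    exact_mod_cast h
  -- finsets
  set Cf : Finset (Fin n → F) := Set.toFinset (C : Set (Fin n → F)) with hCf
  set Df : Finset (Fin n → F) :=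
    Finset.univ.filter (fun x => ∀ y ∈ C, ∑ j, x j * y j = 0) with hDf
  have hmemC : ∀ x, x ∈ Cf ↔ x ∈ C := fun x => Set.mem_toFinset
  have hmemD : ∀ x, x ∈ Df ↔ ∀ y ∈ C, ∑ j, x j * y j = 0 := fun x => by
    simp [hDf]
  have hcardC : (Cf.card : ℂ) = (q : ℂ) ^ k := by
    rw [hCf, Set.toFinset_card]
    rw [show Fintype.card (C : Set (Fin n → F)) = Fintype.card C from rfl]
    rw [Module.card_eq_pow_finrank (K := F) (V := C), hF, hk]
    push_cast; ring
  set t : ℂ := (z : ℂ) with ht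
  -- per-coordinate sum
  have coord : ∀ c : F, (∑ a : F, t ^ (if a = 0 then 0 else 1) * χ (a * c))
      = if c = 0 then 1 + ((q : ℂ) - 1) * t else 1 - t := by
    intro c
    by_cases hc : c = 0
    · rw [if_pos hc]
      subst hc
      simp only [mul_zero, AddChar.map_zero_eq_one, mul_one]
      have h1 : ∀ a : F, t ^ (if a = 0 then 0 else 1) = if a = 0 then 1 else t := fun a => by
        split <;> simp
      rw [Finset.sum_congr rfl fun a _ => h1 a, Finset.sum_ite, Finset.sum_const,
        Finset.sum_const]
      have hcard : (Finset.univ.filter (fun a : F => ¬a = 0)).card = q - 1 := by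
        rw [Finset.filter_not, Finset.filter_eq' Finset.univ 0, if_pos (Finset.mem_univ 0),
          Finset.card_sdiff_of_subset (by simp), Finset.card_univ, hF, Finset.card_singleton]
      rw [hcard, Finset.filter_eq' Finset.univ 0, if_pos (Finset.mem_univ 0),
        Finset.card_singleton]
      simp only [one_smul, nsmul_eq_mul, Nat.cast_sub hq1, Nat.cast_one]
    · rw [if_neg hc]
      have hterm : ∀ a : F, t ^ (if a = 0 then 0 else 1) * χ (a * c)
          = (if a = 0 then 1 - t else 0) + t * χ (a * c) := by
        intro a
        by_cases ha : a = 0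
        · subst ha; simp [AddChar.map_zero_eq_one]
        · rw [if_neg ha, if_neg ha, pow_one, zero_add]
      rw [Finset.sum_congr rfl fun a _ => hterm a, Finset.sum_add_distrib,
        Finset.sum_ite_eq' Finset.univ (0 : F) (fun _ => 1 - t), if_pos (Finset.mem_univ 0),
        ← Finset.mul_sum, hsum0 c hc, mul_zero, add_zero]
  -- expansion of the full sum over all vectors
  have expand : ∀ x : Fin n → F,
      (∑ y : Fin n → F, t ^ hammingNorm y * χ (∑ j, y j * x j))
        = (1 + ((q : ℂ) - 1) * t) ^ (n - hammingNorm x) * (1 - t) ^ hammingNorm x := by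
    intro x
    have hterm : ∀ y : Fin n → F, t ^ hammingNorm y * χ (∑ j, y j * x j)
        = ∏ j, (t ^ (if y j = 0 then 0 else 1) * χ (y j * x j)) := by
      intro y
      rw [Finset.prod_mul_distrib, ← addChar_map_sum, Finset.prod_pow_eq_pow_sum]
      congr 2
      rw [hammingNorm, Finset.card_filter]
      exact Finset.sum_congr rfl fun j _ => by by_cases h : y j = 0 <;> simp [h]
    rw [Finset.sum_congr rfl fun y _ => hterm y]
    rw [← Fintype.piFinset_univ]
    rw [← Finset.prod_univ_sum (κ := fun _ : Fin n => F) (fun _ => Finset.univ)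
      (fun j a => t ^ (if a = 0 then 0 else 1) * χ (a * x j))]
    rw [Finset.prod_congr rfl fun j _ => coord (x j)]
    rw [Finset.prod_ite (f := fun _ => 1 + ((q : ℂ) - 1) * t) (g := fun _ => 1 - t)]
    simp only [Finset.prod_const]
    congr 2
    have := Finset.card_filter_add_card_filter_not
      (s := (Finset.univ : Finset (Fin n))) (p := fun j => x j = 0)
    rw [Finset.card_univ, Fintype.card_fin] at this
    have hn : hammingNorm x = (Finset.univ.filter (fun j => ¬ x j = 0)).card := rfl
    omega
  -- orthogonality
  have orth : ∀ y : Fin n → F, y ∉ Df → (∑ x ∈ Cf, χ (∑ j, y j * x j)) = 0 := by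
    intro y hy
    rw [hmemD] at hy
    push_neg at hy
    obtain ⟨c, hcC, hb⟩ := hy
    set b : F := ∑ j, y j * c j with hbdef
    obtain ⟨u, hu⟩ := AddChar.ne_one_iff.mp (hprim hb)
    rw [AddChar.mulShift_apply] at hu
    set c₀ : Fin n → F := u • c with hc₀
    have hc₀C : c₀ ∈ C := C.smul_mem u hcC
    have hχc₀ : χ (∑ j, y j * c₀ j) = χ (b * u) := by
      congr 1
      rw [hbdef, Finset.sum_mul]
      exact Finset.sum_congr rfl fun j _ => by simp [hc₀]; ring
    have hshift : (∑ x ∈ Cf, χ (∑ j, y j * x j))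
        = ∑ x ∈ Cf, χ (∑ j, y j * (c₀ + x) j) := by
      refine Finset.sum_nbij' (i := fun x => -c₀ + x) (j := fun x => c₀ + x)
        ?_ ?_ ?_ ?_ ?_
      · intro a ha; rw [hmemC] at ha ⊢; exact C.add_mem (C.neg_mem hc₀C) ha
      · intro a ha; rw [hmemC] at ha ⊢; exact C.add_mem hc₀C ha
      · intro a _; simp only [add_neg_cancel_left]
      · intro a _; simp only [neg_add_cancel_left]
      · intro a _
        congr 1
        refine Finset.sum_congr rfl fun j _ => ?_
        rw [add_neg_cancel_left]
    have hexp : ∀ x : Fin n → F, χ (∑ j, y j * (c₀ + x) j)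
        = χ (b * u) * χ (∑ j, y j * x j) := by
      intro x
      rw [← hχc₀, ← AddChar.map_add_eq_mul]
      congr 1
      rw [← Finset.sum_add_distrib]
      exact Finset.sum_congr rfl fun j _ => by simp [mul_add]
    rw [Finset.sum_congr rfl fun x _ => hexp x, ← Finset.mul_sum] at hshift
    exact eq_zero_of_mul_eq_self_left hu hshift.symm
  -- the main identity over ℂ
  have main : (q : ℂ) ^ k * ∑ y ∈ Df, t ^ hammingNorm y
      = ∑ x ∈ Cf, (1 + ((q : ℂ) - 1) * t) ^ (n - hammingNorm x) * (1 - t) ^ hammingNorm x := by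
    rw [← Finset.sum_congr rfl fun x (_ : x ∈ Cf) => expand x]
    rw [Finset.sum_comm]
    have hstep : ∀ y : Fin n → F,
        (∑ x ∈ Cf, t ^ hammingNorm y * χ (∑ j, y j * x j))
          = t ^ hammingNorm y * (if y ∈ Df then (q : ℂ) ^ k else 0) := by
      intro y
      rw [← Finset.mul_sum]
      congr 1
      by_cases hy : y ∈ Df
      · rw [if_pos hy]
        rw [hmemD] at hy
        have : ∀ x ∈ Cf, χ (∑ j, y j * x j) = 1 := by
          intro x hx
          rw [hy x ((hmemC x).mp hx), AddChar.map_zero_eq_one]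
        rw [Finset.sum_congr rfl this, Finset.sum_const, nsmul_eq_mul, mul_one, hcardC]
      · rw [if_neg hy]; exact orth y hy
    rw [Finset.sum_congr rfl fun y (_ : y ∈ Finset.univ) => hstep y]
    simp only [mul_ite, mul_zero]
    rw [← Finset.sum_filter, Finset.filter_mem_eq_inter, Finset.univ_inter, Finset.mul_sum]
    exact Finset.sum_congr rfl fun y _ => mul_comm _ _
  -- transfer to ℝ
  have mainR : (q : ℝ) ^ k * ∑ y ∈ Df, z ^ hammingNorm y
      = ∑ x ∈ Cf, (1 + ((q : ℝ) - 1) * z) ^ (n - hammingNorm x) * (1 - z) ^ hammingNorm x := by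
    have hinj : Function.Injective (Complex.ofReal) := Complex.ofReal_injective
    apply hinj
    push_cast
    exact main
  -- rewrite the ncard sums as finset sums
  have hLHS : (∑ i ∈ Finset.range (n + 1),
      (Set.ncard {x : Fin n → F |
          (∀ y ∈ C, ∑ j, x j * y j = 0) ∧ hammingNorm x = i} : ℝ) * z ^ i)
      = ∑ y ∈ Df, z ^ hammingNorm y := by
    rw [← fib_sum Df z]
    refine Finset.sum_congr rfl fun i _ => ?_
    congr 2
    have : {x : Fin n → F | (∀ y ∈ C, ∑ j, x j * y j = 0) ∧ hammingNorm x = i}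
        = ↑(Df.filter fun x => hammingNorm x = i) := by
      ext x; simp [hDf]
    rw [this, Set.ncard_coe_finset]
  set w : ℝ := (1 - z) / (1 + ((q : ℝ) - 1) * z) with hw
  have hRHS : (∑ i ∈ Finset.range (n + 1),
      (Set.ncard {x : Fin n → F | x ∈ C ∧ hammingNorm x = i} : ℝ) * w ^ i)
      = ∑ x ∈ Cf, w ^ hammingNorm x := by
    rw [← fib_sum Cf w]
    refine Finset.sum_congr rfl fun i _ => ?_
    congr 2
    have : {x : Fin n → F | x ∈ C ∧ hammingNorm x = i}
        = ↑(Cf.filter fun x => hammingNorm x = i) := by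
      ext x; simp [hCf]
    rw [this, Set.ncard_coe_finset]
  rw [hLHS, hRHS]
  have hpow : ∀ x ∈ Cf, (1 + ((q : ℝ) - 1) * z) ^ n * w ^ hammingNorm x
      = (1 + ((q : ℝ) - 1) * z) ^ (n - hammingNorm x) * (1 - z) ^ hammingNorm x := by
    intro x _
    have hi : hammingNorm x ≤ n :=
      hammingNorm_le_card_fintype.trans_eq (Fintype.card_fin n)
    set i := hammingNorm x
    have hA : (1 + ((q : ℝ) - 1) * z) ^ n
        = (1 + ((q : ℝ) - 1) * z) ^ (n - i) * (1 + ((q : ℝ) - 1) * z) ^ i := by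
      rw [← pow_add, Nat.sub_add_cancel hi]
    rw [hA, hw, div_pow, mul_assoc, mul_div_cancel₀ _ (pow_ne_zero i hz)]
  rw [mul_assoc, Finset.mul_sum, Finset.sum_congr rfl hpow, ← mainR,
    ← mul_assoc, inv_mul_cancel₀ hqk, one_mul]
end

section
/- Let q be a prime power with 5 | (q+1) and 5 ∤ (q-1), and let ω ∈ F_{q^2} be a primitive 5th root of unity. Let C = {(Tr(a ω^{-i}))_{i=0}^{4} : a ∈ F_{q^2}} ⊆ F_q^5, where Tr is the trace from F_{q^2} to F_q. Then C is a 2-dimensional linear code of length 5 over F_q with weight enumerator 1 + 5(q-1)z^4 + (q-1)(q-4)z^5; in particular every nonzero codeword has weight 4 or 5 and the minimum distance of C is 4. -/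
/-!
Each coordinate `a ↦ Tr(a ω⁻ⁱ)` is a surjective `F`-linear functional on the plane `E`, so its
kernel is a line with `q` points. As `ω ^ q = ω⁻¹`, the `i`-th coordinate of a vanishes iff
`a + a ^ q ω ^ (2i) = 0`, and since `5` is odd the `ω ^ (2i)` are distinct: a nonzero `a` kills at
most one coordinate. So nonzero codewords have weight `4` or `5`, the encoding is injective, the
five punctured kernels give the `5(q - 1)` words of weight `4`, and the remaining
`q² - 1 - 5(q - 1) = (q - 1)(q - 4)` nonzero words have weight `5`.
-/

open Polynomial

open Finset

section QuadraticExtension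

variable {F E : Type*} [Field F] [Fintype F] [Field E] [Fintype E] [Algebra F E]

theorem finrank_eq_two_of_card_eq_sq (hE : Fintype.card E = Fintype.card F ^ 2) :
    Module.finrank F E = 2 :=
  Nat.pow_right_injective (Fintype.one_lt_card (α := F)) <| by
    simp only [← Module.card_eq_pow_finrank, hE]

theorem algebraMap_trace_eq_add_pow (hE : Fintype.card E = Fintype.card F ^ 2) (x : E) :
    algebraMap F E (Algebra.trace F E x) = x + x ^ Fintype.card F := by
  simp [FiniteField.algebraMap_trace_eq_sum_pow, finrank_eq_two_of_card_eq_sq hE,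
    Finset.sum_range_succ, Nat.card_eq_fintype_card]

theorem trace_eq_zero_iff_add_pow_eq_zero (hE : Fintype.card E = Fintype.card F ^ 2) (x : E) :
    Algebra.trace F E x = 0 ↔ x + x ^ Fintype.card F = 0 := by
  rw [← algebraMap_trace_eq_add_pow hE, FaithfulSMul.algebraMap_eq_zero_iff]

end QuadraticExtension

theorem LinearMap.natCard_ker_mul_card_eq_of_surjective {K V : Type*} [Field K] [Fintype K]
    [AddCommGroup V] [Module K V] [Module.Finite K V] (f : V →ₗ[K] K)
    (hf : Function.Surjective f) :
    Nat.card (LinearMap.ker f) * Fintype.card K = Nat.card V := by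
  have hrank := f.finrank_range_add_finrank_ker
  rw [LinearMap.range_eq_top.2 hf, finrank_top, Module.finrank_self] at hrank
  rw [Module.natCard_eq_pow_finrank (K := K) (V := V),
    Module.natCard_eq_pow_finrank (K := K) (V := LinearMap.ker f), Nat.card_eq_fintype_card,
    ← hrank, pow_add, pow_one, mul_comm]

section HammingWeight

variable {ι K V : Type*} [Fintype ι] [Zero K] [Zero V] {T : V → ι → K}

theorem eq_zero_of_apply_eq_zero (hT : ∀ v ≠ 0, ∀ i j, T v i = 0 → T v j = 0 → i = j)
    (hι : 1 < Fintype.card ι) {v : V} (hv : T v = 0) : v = 0 := by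
  by_contra hv0
  obtain ⟨i, j, hij⟩ := Fintype.exists_pair_of_one_lt_card hι
  exact hij (hT v hv0 i j (by simp [hv]) (by simp [hv]))

variable [DecidableEq K]

theorem hammingNorm_add_card_filter_eq_zero (c : ι → K) :
    hammingNorm c + #{i | c i = 0} = Fintype.card ι := by
  rw [add_comm, hammingNorm, ← card_univ]
  exact card_filter_add_card_filter_not _

theorem hammingNorm_eq_card_sub_one_or_eq_card {c : ι → K}
    (hc : ∀ i j, c i = 0 → c j = 0 → i = j) :
    (∃ i, c i = 0) ∧ hammingNorm c = Fintype.card ι - 1 ∨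
      (∀ i, c i ≠ 0) ∧ hammingNorm c = Fintype.card ι := by
  have hsum := hammingNorm_add_card_filter_eq_zero c
  by_cases h : ∃ i, c i = 0
  · obtain ⟨i, hi⟩ := h
    have hone : #{j | c j = 0} = 1 := card_eq_one.2 ⟨i, by
      ext j
      simpa using ⟨fun hj => hc j i hj hi, fun hj => hj ▸ hi⟩⟩
    exact .inl ⟨⟨i, hi⟩, by omega⟩
  · simp only [not_exists] at h
    have hnone : #{j | c j = 0} = 0 := by simpa using h
    exact .inr ⟨h, by omega⟩

variable [Fintype V]

theorem card_filter_hammingNorm_eq_zero (hT0 : T 0 = 0)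
    (hT : ∀ v ≠ 0, ∀ i j, T v i = 0 → T v j = 0 → i = j) (hι : 1 < Fintype.card ι) :
    #{v | hammingNorm (T v) = 0} = 1 := by
  rw [card_eq_one]
  refine ⟨0, ext fun v => ?_⟩
  simp only [mem_filter, mem_univ, true_and, mem_singleton, hammingNorm_eq_zero]
  exact ⟨eq_zero_of_apply_eq_zero hT hι, fun hv => hv ▸ hT0⟩

theorem card_filter_hammingNorm_eq_of_pos_of_lt (hT0 : T 0 = 0)
    (hT : ∀ v ≠ 0, ∀ i j, T v i = 0 → T v j = 0 → i = j) {w : ℕ} (hw0 : 0 < w)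
    (hw : w < Fintype.card ι - 1) :
    #{v | hammingNorm (T v) = w} = 0 := by
  refine card_eq_zero.2 (filter_eq_empty_iff.2 fun v _ hv => ?_)
  by_cases hv0 : v = 0
  · simp [hv0, hT0] at hv
    omega
  · rcases hammingNorm_eq_card_sub_one_or_eq_card (hT v hv0) with ⟨-, h⟩ | ⟨-, h⟩ <;> omega

variable [DecidableEq V]

theorem card_filter_hammingNorm_eq_card_sub_one (hT0 : T 0 = 0)
    (hT : ∀ v ≠ 0, ∀ i j, T v i = 0 → T v j = 0 → i = j) (hι : 1 < Fintype.card ι) {N : ℕ}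
    (hN : ∀ i, #{v | T v i = 0} = N) :
    #{v | hammingNorm (T v) = Fintype.card ι - 1} = Fintype.card ι * (N - 1) := by
  have hfib : ({v | hammingNorm (T v) = Fintype.card ι - 1} : Finset V) =
      univ.biUnion fun i => ({v | T v i = 0} : Finset V).erase 0 := by
    ext v
    simp only [mem_filter, mem_univ, true_and, mem_biUnion, mem_erase]
    constructor
    · intro hv
      have hv0 : v ≠ 0 := by rintro rfl; simp [hT0] at hv; omega
      rcases hammingNorm_eq_card_sub_one_or_eq_card (hT v hv0) with ⟨⟨i, hi⟩, -⟩ | ⟨-, h⟩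
      · exact ⟨i, hv0, hi⟩
      · omega
    · rintro ⟨i, hv0, hi⟩
      rcases hammingNorm_eq_card_sub_one_or_eq_card (hT v hv0) with ⟨-, h⟩ | ⟨h, -⟩
      · exact h
      · exact absurd hi (h i)
  rw [hfib, card_biUnion]
  · simp [card_erase_of_mem, hT0, hN]
  · intro i _ j _ hij
    refine disjoint_left.2 fun v hvi hvj => hij (hT v (ne_of_mem_erase hvi) i j ?_ ?_)
    · exact (mem_filter.1 (mem_of_mem_erase hvi)).2
    · exact (mem_filter.1 (mem_of_mem_erase hvj)).2

theorem card_filter_hammingNorm_eq_card_add_card_sub_one (hT0 : T 0 = 0)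
    (hT : ∀ v ≠ 0, ∀ i j, T v i = 0 → T v j = 0 → i = j) (hι : 1 < Fintype.card ι) :
    #{v | hammingNorm (T v) = Fintype.card ι} +
      #{v | hammingNorm (T v) = Fintype.card ι - 1} + 1 = Fintype.card V := by
  have hsplit := card_filter_add_card_filter_not (s := univ.erase (0 : V))
    fun v => hammingNorm (T v) = Fintype.card ι
  rw [card_erase_of_mem (mem_univ _), card_univ] at hsplit
  have hfull : (univ.erase (0 : V)).filter (fun v => hammingNorm (T v) = Fintype.card ι) =
      ({v | hammingNorm (T v) = Fintype.card ι} : Finset V) := by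
    ext v
    simp only [mem_filter, mem_erase, mem_univ, and_true, true_and]
    refine ⟨And.right, fun hv => ⟨?_, hv⟩⟩
    rintro rfl
    simp [hT0] at hv
    omega
  have hdefect : (univ.erase (0 : V)).filter (fun v => ¬hammingNorm (T v) = Fintype.card ι) =
      ({v | hammingNorm (T v) = Fintype.card ι - 1} : Finset V) := by
    ext v
    simp only [mem_filter, mem_erase, mem_univ, and_true, true_and]
    constructor
    · rintro ⟨hv0, hv⟩
      rcases hammingNorm_eq_card_sub_one_or_eq_card (hT v hv0) with ⟨-, h⟩ | ⟨-, h⟩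
      · exact h
      · exact absurd h hv
    · intro hv
      refine ⟨?_, by omega⟩
      rintro rfl
      simp [hT0] at hv
      omega
  have : 0 < Fintype.card V := Fintype.card_pos
  rw [hfull, hdefect] at hsplit
  omega

end HammingWeight

section TraceEncoder

variable (F : Type*) {E : Type*} [Field F] [Field E] [Algebra F E]

noncomputable def traceEncoder (ω : E) (n : ℕ) : E →ₗ[F] Fin n → F :=
  LinearMap.pi fun i => Algebra.trace F E ∘ₗ LinearMap.mulRight F (ω ^ (i : ℕ))⁻¹

variable {F}

@[simp]
theorem traceEncoder_apply (ω : E) (n : ℕ) (a : E) (i : Fin n) :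
    traceEncoder F ω n a i = Algebra.trace F E (a * (ω ^ (i : ℕ))⁻¹) :=
  rfl

variable [Fintype F] [Fintype E] {ω : E} {n : ℕ}

theorem traceEncoder_apply_eq_zero_iff (hE : Fintype.card E = Fintype.card F ^ 2)
    (hω : ω ^ (Fintype.card F + 1) = 1) (a : E) (i : Fin n) :
    traceEncoder F ω n a i = 0 ↔ a + a ^ Fintype.card F * ω ^ (2 * (i : ℕ)) = 0 := by
  set x := ω ^ (i : ℕ)
  have hx : x ^ Fintype.card F * x = 1 := by
    rw [← pow_succ, ← pow_mul, mul_comm, pow_mul, hω, one_pow]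
  have hx0 : x ≠ 0 := right_ne_zero_of_mul_eq_one hx
  have hxq : x⁻¹ ^ Fintype.card F = x := by rw [inv_pow, inv_eq_of_mul_eq_one_right hx]
  have hfactor : a * x⁻¹ + (a * x⁻¹) ^ Fintype.card F =
      x⁻¹ * (a + a ^ Fintype.card F * ω ^ (2 * (i : ℕ))) := by
    rw [mul_pow, hxq, pow_mul']
    field_simp
    ring
  rw [traceEncoder_apply, trace_eq_zero_iff_add_pow_eq_zero hE, hfactor, mul_eq_zero,
    or_iff_right (inv_ne_zero hx0)]

theorem eq_of_traceEncoder_apply_eq_zero (hE : Fintype.card E = Fintype.card F ^ 2)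
    (hωq : ω ^ (Fintype.card F + 1) = 1) (hω : IsPrimitiveRoot ω n) (hn : Odd n) {a : E}
    (ha : a ≠ 0) {i j : Fin n} (hi : traceEncoder F ω n a i = 0)
    (hj : traceEncoder F ω n a j = 0) : i = j := by
  rw [traceEncoder_apply_eq_zero_iff hE hωq] at hi hj
  have hpow : ω ^ (2 * (i : ℕ)) = ω ^ (2 * (j : ℕ)) :=
    mul_left_cancel₀ (pow_ne_zero (Fintype.card F) ha) (by linear_combination hi - hj)
  have hmod : 2 * (i : ℕ) ≡ 2 * j [MOD n] := hω.pow_inj (Nat.mod_lt _ hn.pos)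
    (Nat.mod_lt _ hn.pos) (by simpa only [hω.eq_orderOf, pow_mod_orderOf] using hpow)
  exact Fin.ext <| Nat.ModEq.eq_of_lt_of_lt
    (hmod.cancel_left_of_coprime (Nat.coprime_two_right.2 hn)) i.isLt j.isLt

theorem card_filter_traceEncoder_apply_eq_zero [DecidableEq F]
    (hE : Fintype.card E = Fintype.card F ^ 2) (hω : ω ≠ 0) (i : Fin n) :
    #{a | traceEncoder F ω n a i = 0} = Fintype.card F := by
  let f := LinearMap.proj (R := F) (φ := fun _ : Fin n => F) i ∘ₗ traceEncoder F ω n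
  have hf : Function.Surjective f := fun y => by
    obtain ⟨x, rfl⟩ := Algebra.trace_surjective F E y
    exact ⟨x * ω ^ (i : ℕ), by simp [f, pow_ne_zero _ hω]⟩
  have hker := f.natCard_ker_mul_card_eq_of_surjective hf
  rw [Nat.card_eq_fintype_card (α := E), hE, sq] at hker
  rw [← Nat.mul_right_cancel Fintype.card_pos hker, ← Fintype.card_subtype,
    ← Nat.card_eq_fintype_card]
  rfl

end TraceEncoder

theorem Set.ncard_sep_range {α β : Type*} [Fintype α] {f : α → β} (hf : Function.Injective f)
    (P : β → Prop) [DecidablePred P] :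
    {c ∈ Set.range f | P c}.ncard = #{a | P (f a)} := by
  have himage : {c ∈ Set.range f | P c} = f '' {a | P (f a)} := by
    ext c
    constructor
    · rintro ⟨⟨a, rfl⟩, hc⟩
      exact ⟨a, hc, rfl⟩
    · rintro ⟨a, hc, rfl⟩
      exact ⟨⟨a, rfl⟩, hc⟩
  rw [himage, Set.ncard_image_of_injective _ hf, ← coe_filter_univ, Set.ncard_coe_finset]

theorem stmt_6_general (q : ℕ)
    (F E : Type) [Field F] [Fintype F] [DecidableEq F] [Field E] [Fintype E] [Algebra F E]
    (hF : Fintype.card F = q) (hE : Fintype.card E = q ^ 2)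
    (h1 : 5 ∣ q + 1)
    (ω : E) (hω : IsPrimitiveRoot ω 5)
    (Ccode : Set (Fin 5 → F))
    (hC : Ccode = {c | ∃ a : E, ∀ i : Fin 5,
      c i = Algebra.trace F E (a * (ω ^ (i : ℕ))⁻¹)}) :
    Module.finrank F (Submodule.span F Ccode) = 2 ∧
      (Set.ncard {c ∈ Ccode | hammingNorm c = 0} : ℤ) = 1 ∧
      (∀ i, 0 < i → i < 4 → (Set.ncard {c ∈ Ccode | hammingNorm c = i} : ℤ) = 0) ∧
      (Set.ncard {c ∈ Ccode | hammingNorm c = 4} : ℤ) = 5 * ((q : ℤ) - 1) ∧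
      (Set.ncard {c ∈ Ccode | hammingNorm c = 5} : ℤ) = ((q : ℤ) - 1) * ((q : ℤ) - 4) ∧
      (∀ c ∈ Ccode, c ≠ 0 → hammingNorm c = 4 ∨ hammingNorm c = 5) ∧
      sInf {w | ∃ c ∈ Ccode, c ≠ 0 ∧ hammingNorm c = w} = 4 := by
  classical
  subst hF
  set T := traceEncoder F ω 5
  have hCT : Ccode = Set.range T := by
    rw [hC]; ext c; simp [funext_iff, eq_comm, T]
  have hT : ∀ a ≠ 0, ∀ i j, T a i = 0 → T a j = 0 → i = j := fun a =>
    eq_of_traceEncoder_apply_eq_zero hE ((hω.pow_eq_one_iff_dvd _).2 h1) hω (by decide)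
  have hι : 1 < Fintype.card (Fin 5) := by simp
  have hinj : Function.Injective T :=
    (injective_iff_map_eq_zero T).2 fun a => eq_zero_of_apply_eq_zero hT hι
  have hcount (w : ℕ) : {c ∈ Ccode | hammingNorm c = w}.ncard = #{a | hammingNorm (T a) = w} :=
    hCT ▸ Set.ncard_sep_range hinj _
  have h4 : #{a | hammingNorm (T a) = 4} = 5 * (Fintype.card F - 1) :=
    card_filter_hammingNorm_eq_card_sub_one (map_zero T) hT hι
      (card_filter_traceEncoder_apply_eq_zero hE (hω.ne_zero (by norm_num)))
  have h5 := card_filter_hammingNorm_eq_card_add_card_sub_one (map_zero T) hT hι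
  simp only [Fintype.card_fin, Nat.add_one_sub_one, h4, hE] at h5
  have hweights : ∀ c ∈ Ccode, c ≠ 0 → hammingNorm c = 4 ∨ hammingNorm c = 5 := by
    rw [hCT]
    rintro _ ⟨a, rfl⟩ ha
    exact (hammingNorm_eq_card_sub_one_or_eq_card (hT a (by rintro rfl; exact ha (map_zero T)))).imp
      And.right And.right
  have hq : 1 < Fintype.card F := Fintype.one_lt_card
  refine ⟨?_, ?_, fun w hw0 hw4 => ?_, ?_, ?_, hweights, ?_⟩
  · rw [hCT, ← LinearMap.coe_range, Submodule.span_eq, LinearMap.finrank_range_of_inj hinj,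
      finrank_eq_two_of_card_eq_sq hE]
  · rw [hcount, card_filter_hammingNorm_eq_zero (map_zero T) hT hι, Nat.cast_one]
  · rw [hcount, card_filter_hammingNorm_eq_of_pos_of_lt (map_zero T) hT hw0 (by simpa),
      Nat.cast_zero]
  · rw [hcount, h4]; push_cast [Nat.cast_sub hq.le]; ring
  · rw [hcount]
    have h5' := congrArg (Nat.cast : ℕ → ℤ) h5
    push_cast [Nat.cast_sub hq.le] at h5'
    linear_combination h5'
  · obtain ⟨a, ha⟩ : ({a | hammingNorm (T a) = 4} : Finset E).Nonempty := by
      rw [← card_pos, h4]; omega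
    refine IsLeast.csInf_eq ⟨⟨T a, hCT ▸ ⟨a, rfl⟩, ?_, (mem_filter.1 ha).2⟩, ?_⟩
    · exact hammingNorm_ne_zero_iff.1 (by rw [(mem_filter.1 ha).2]; norm_num)
    · rintro w ⟨c, hc, hc0, rfl⟩
      rcases hweights c hc hc0 with h | h <;> omega

theorem stmt_6 (p m q : ℕ) (hp : p.Prime) (hm : 0 < m) (hq : q = p ^ m)
    (F E : Type) [Field F] [Fintype F] [DecidableEq F] [Field E] [Fintype E] [Algebra F E]
    (hF : Fintype.card F = q) (hE : Fintype.card E = q ^ 2)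
    (h1 : 5 ∣ q + 1) (h2 : ¬ (5 ∣ q - 1))
    (ω : E) (hω : IsPrimitiveRoot ω 5)
    (Ccode : Set (Fin 5 → F))
    (hC : Ccode = {c | ∃ a : E, ∀ i : Fin 5,
      c i = Algebra.trace F E (a * (ω ^ (i : ℕ))⁻¹)}) :
    Module.finrank F (Submodule.span F Ccode) = 2 ∧
      (Set.ncard {c ∈ Ccode | hammingNorm c = 0} : ℤ) = 1 ∧
      (∀ i, 0 < i → i < 4 → (Set.ncard {c ∈ Ccode | hammingNorm c = i} : ℤ) = 0) ∧
      (Set.ncard {c ∈ Ccode | hammingNorm c = 4} : ℤ) = 5 * ((q : ℤ) - 1) ∧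
      (Set.ncard {c ∈ Ccode | hammingNorm c = 5} : ℤ) = ((q : ℤ) - 1) * ((q : ℤ) - 4) ∧
      (∀ c ∈ Ccode, c ≠ 0 → hammingNorm c = 4 ∨ hammingNorm c = 5) ∧
      sInf {w | ∃ c ∈ Ccode, c ≠ 0 ∧ hammingNorm c = w} = 4 :=
  stmt_6_general q F E hF hE h1 ω hω Ccode hC
end

section
/- Let q be a prime power with 5 | (q-1), let ω ∈ F_q be a primitive 5th root of unity, and let 0 ≤ u_1 < u_2 ≤ 4. The cyclic code C of length 5 over F_q generated by (x-ω^{u_1})(x-ω^{u_2}) is a [5,3] code with weight enumerator 1 + 10(q-1)z^3 + 5(q-1)(q-3)z^4 + (q-1)(q^2-4q+6)z^5; in particular C is MDS with minimum distance 3. -/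
/-!
With `a = ω ^ u₁` and `b = ω ^ u₂`, a word lies in the code iff its polynomial vanishes at `a` and
`b`, i.e. iff it is killed by the parity checks with columns `(a ^ i, b ^ i)`. Any two of these
columns are linearly independent because `b / a` is a primitive fifth root of unity, so a
codeword is determined by its entries off any two positions, and those entries are arbitrary.
Hence exactly `q ^ (3 - t)` codewords vanish on a given set of `t` positions. Counting the pairs
(codeword, `t`-set of its zero positions) in two ways gives
`∑ w, (5 - w).choose t * A w = (5.choose t) * q ^ (3 - t)` for `t = 0, …, 5`, a triangular system
in the weight counts `A w` whose solution is the stated weight enumerator.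
-/

open Polynomial

/-- The cyclic code of length `n` over `F` generated by `g` in `F[x]/(xⁿ-1)`,
viewed as a set of coefficient vectors. -/
def cyclicCode (F : Type) [Field F] (n : ℕ) (g : F[X]) : Set (Fin n → F) :=
  {c | Ideal.Quotient.mk (Ideal.span {(X : F[X]) ^ n - 1})
        (∑ i : Fin n, C (c i) * X ^ (i : ℕ)) ∈
      Ideal.span {Ideal.Quotient.mk (Ideal.span {(X : F[X]) ^ n - 1}) g}}

open Finset

theorem Ideal.Quotient.mk_mem_span_singleton_mk_iff {R : Type*} [CommRing R] {g m : R}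
    (hgm : g ∣ m) (f : R) :
    Ideal.Quotient.mk (Ideal.span {m}) f ∈ Ideal.span {Ideal.Quotient.mk (Ideal.span {m}) g} ↔
      g ∣ f := by
  rw [← Set.image_singleton, ← Ideal.map_span, Ideal.mem_quotient_iff_mem_sup,
    sup_eq_left.mpr (Ideal.span_singleton_le_span_singleton.mpr hgm), Ideal.mem_span_singleton]

theorem Polynomial.X_sub_C_mul_X_sub_C_dvd_iff {F : Type*} [Field F] {a b : F} (hab : a ≠ b)
    {p : F[X]} : (X - C a) * (X - C b) ∣ p ↔ p.IsRoot a ∧ p.IsRoot b := by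
  rw [← dvd_iff_isRoot, ← dvd_iff_isRoot]
  exact ⟨fun h => ⟨dvd_of_mul_right_dvd h, dvd_of_mul_left_dvd h⟩, fun ⟨ha, hb⟩ =>
    (isCoprime_X_sub_C_of_isUnit_sub (sub_ne_zero.mpr hab).isUnit).mul_dvd ha hb⟩

theorem linearIndependent_pair_of_mul_ne {F : Type*} [Field F] {x y : F × F}
    (h : x.1 * y.2 ≠ x.2 * y.1) : LinearIndependent F ![x, y] := by
  rw [LinearIndependent.pair_iff]
  intro s t hst
  have e₁ : s * x.1 + t * y.1 = 0 := congrArg Prod.fst hst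
  have e₂ : s * x.2 + t * y.2 = 0 := congrArg Prod.snd hst
  have hdet : x.1 * y.2 - x.2 * y.1 ≠ 0 := sub_ne_zero.mpr h
  exact ⟨(mul_eq_zero.mp (by linear_combination y.2 * e₁ - y.1 * e₂ :
      s * (x.1 * y.2 - x.2 * y.1) = 0)).resolve_right hdet,
    (mul_eq_zero.mp (by linear_combination x.1 * e₂ - x.2 * e₁ :
      t * (x.1 * y.2 - x.2 * y.1) = 0)).resolve_right hdet⟩

theorem IsPrimitiveRoot.pow_pow_mul_pow_pow_ne {M : Type*} [CommMonoid M] {ω : M} {p : ℕ}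
    [Fact p.Prime] (hω : IsPrimitiveRoot ω p) {u₁ u₂ j k : ℕ} (hu : (u₁ : ZMod p) ≠ u₂)
    (hjk : (j : ZMod p) ≠ k) :
    (ω ^ u₁) ^ j * (ω ^ u₂) ^ k ≠ (ω ^ u₂) ^ j * (ω ^ u₁) ^ k := by
  intro h
  simp only [← pow_mul, ← pow_add] at h
  rw [(hω.isOfFinOrder (Fact.out : p.Prime).ne_zero).pow_eq_pow_iff_modEq, ← hω.eq_orderOf,
    ← ZMod.natCast_eq_natCast_iff] at h
  push_cast at h
  rcases mul_eq_zero.mp (by linear_combination h : ((u₁ : ZMod p) - u₂) * (j - k) = 0) with h | h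
  exacts [hu (sub_eq_zero.mp h), hjk (sub_eq_zero.mp h)]

section Weights

variable {F ι : Type*} [Zero F] [DecidableEq F] [Fintype ι]

theorem card_filter_forall_mem_eq_zero [Fintype F] [DecidableEq ι] (T : Finset ι) :
    #{w : ι → F | ∀ i ∈ T, w i = 0} = Fintype.card F ^ (Fintype.card ι - #T) := by
  have : ({w : ι → F | ∀ i ∈ T, w i = 0} : Finset _) =
      Fintype.piFinset fun i => if i ∈ T then {0} else univ := by
    ext w
    simp only [mem_filter, mem_univ, true_and, Fintype.mem_piFinset]
    exact forall_congr' fun i => by split_ifs with h <;> simp [h]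
  simp only [this, Fintype.card_piFinset, apply_ite card, card_singleton, card_univ, prod_ite,
    prod_const_one, one_mul, prod_const, filter_not, filter_mem_eq_inter, univ_inter,
    card_sdiff_of_subset (subset_univ T)]

theorem sum_card_vanishing_powersetCard [DecidableEq ι] (s : Finset (ι → F)) (t : ℕ) :
    ∑ Z ∈ powersetCard t univ, #{c ∈ s | ∀ i ∈ Z, c i = 0} =
      ∑ c ∈ s, (Fintype.card ι - hammingNorm c).choose t := by
  simp_rw [card_filter]
  rw [sum_comm]
  refine sum_congr rfl fun c _ => ?_
  have hzeros : #{i | c i = 0} = Fintype.card ι - hammingNorm c :=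
    Nat.eq_sub_of_add_eq (card_filter_add_card_filter_not _)
  rw [← card_filter, ← hzeros, ← card_powersetCard]
  congr 1
  ext Z
  simp [mem_powersetCard, subset_iff, and_comm]

theorem sum_comp_hammingNorm (s : Finset (ι → F)) (f : ℕ → ℕ) :
    ∑ c ∈ s, f (hammingNorm c) =
      ∑ w ∈ range (Fintype.card ι + 1), #{c ∈ s | hammingNorm c = w} * f w := by
  rw [← sum_fiberwise_of_maps_to (g := hammingNorm) (t := range (Fintype.card ι + 1))
    fun c _ => mem_range.mpr (Nat.lt_succ_of_le hammingNorm_le_card_fintype)]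
  refine sum_congr rfl fun w _ => ?_
  rw [sum_congr rfl fun c hc => by rw [(mem_filter.mp hc).2], sum_const, smul_eq_mul]

theorem sInf_hammingNorm_eq [Fintype F] {S : Set (ι → F)} {d : ℕ} (hd₀ : 0 < d)
    (hlt : ∀ w, 0 < w → w < d → Set.ncard {c ∈ S | hammingNorm c = w} = 0)
    (hd : Set.ncard {c ∈ S | hammingNorm c = d} ≠ 0) :
    sInf {w | ∃ c ∈ S, c ≠ 0 ∧ hammingNorm c = w} = d := by
  obtain ⟨c, hcS, hcd⟩ := Set.nonempty_of_ncard_ne_zero hd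
  have hc₀ : c ≠ 0 := by rintro rfl; rw [hammingNorm_zero] at hcd; omega
  refine le_antisymm (Nat.sInf_le ⟨c, hcS, hc₀, hcd⟩) (le_csInf ⟨d, c, hcS, hc₀, hcd⟩ ?_)
  rintro w ⟨c, hcS, hc₀, rfl⟩
  by_contra! hw
  have hempty := (Set.ncard_eq_zero).mp (hlt _ (hammingNorm_pos_iff.mpr hc₀) hw)
  exact hempty.subset ⟨hcS, rfl⟩

end Weights

section CheckCode

variable {F ι V : Type*} [Field F] [Fintype ι] [AddCommGroup V] [Module F V]

variable (F) in
def checkCode (v : ι → V) : Submodule F (ι → F) :=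
  LinearMap.ker (Fintype.linearCombination F v)

theorem mem_checkCode {v : ι → V} {c : ι → F} : c ∈ checkCode F v ↔ ∑ i, c i • v i = 0 :=
  Iff.rfl

variable [DecidableEq ι] {v : ι → V} {j k : ι}

theorem eq_zero_of_mem_checkCode_of_eq_zero_off_pair (hv : LinearIndependent F ![v j, v k])
    (hjk : j ≠ k) {c : ι → F} (hc : c ∈ checkCode F v) (hoff : ∀ i, i ≠ j → i ≠ k → c i = 0) :
    c = 0 := by
  rw [mem_checkCode, Fintype.sum_eq_add j k hjk fun i hi => by simp [hoff i hi.1 hi.2]] at hc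
  obtain ⟨hj, hk⟩ := LinearIndependent.pair_iff.mp hv _ _ hc
  funext i
  by_cases hij : i = j
  · exact hij ▸ hj
  by_cases hik : i = k
  · exact hik ▸ hk
  exact hoff i hij hik

theorem exists_mem_checkCode_eq_off_pair (hV : Module.finrank F V = 2)
    (hv : LinearIndependent F ![v j, v k]) (w : ι → F) :
    ∃ c ∈ checkCode F v, ∀ i, i ≠ j → i ≠ k → c i = w i := by
  have hspan := hv.span_eq_top_of_card_eq_finrank (by simp [hV])
  obtain ⟨g, hg⟩ := (Submodule.mem_span_range_iff_exists_fun F).mp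
    (hspan ▸ Submodule.mem_top : -Fintype.linearCombination F v w ∈ _)
  simp only [Fin.sum_univ_two, Matrix.cons_val_zero, Matrix.cons_val_one,
    Matrix.cons_val_fin_one] at hg
  refine ⟨w + Pi.single j (g 0) + Pi.single k (g 1), ?_, fun i hij hik => by simp [hij, hik]⟩
  rw [checkCode, LinearMap.mem_ker, map_add, map_add, Fintype.linearCombination_apply_single,
    Fintype.linearCombination_apply_single, add_assoc, hg, add_neg_cancel]

variable [Fintype F] [DecidableEq F]

open Classical in
theorem card_vanishing_checkCode_of_card_add_two_le (hV : Module.finrank F V = 2)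
    (hv : Pairwise fun j k => LinearIndependent F ![v j, v k]) {Z : Finset ι}
    (hZ : #Z + 2 ≤ Fintype.card ι) :
    #{c : ι → F | c ∈ checkCode F v ∧ ∀ i ∈ Z, c i = 0} =
      Fintype.card F ^ (Fintype.card ι - 2 - #Z) := by
  obtain ⟨j, hj, k, hk, hjk⟩ := one_lt_card.mp (show 1 < #Zᶜ by rw [card_compl]; omega)
  rw [mem_compl] at hj hk
  have hT : #(insert j (insert k Z)) = #Z + 2 := by
    rw [card_insert_of_notMem (by simp [hjk, hj]), card_insert_of_notMem hk]
  rw [show Fintype.card ι - 2 - #Z = Fintype.card ι - #(insert j (insert k Z)) by omega,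
    ← card_filter_forall_mem_eq_zero]
  -- erasing the entries at `j` and `k` maps these codewords bijectively onto the words
  -- vanishing on `insert j (insert k Z)`
  refine card_nbij (fun c i => if i = j ∨ i = k then 0 else c i) ?_ ?_ ?_
  · intro c hc
    simp only [mem_coe, mem_filter, mem_univ, true_and, mem_insert] at hc ⊢
    intro i hi
    split_ifs with h
    · rfl
    · exact hc.2 i (by tauto)
  · intro c₁ hc₁ c₂ hc₂ h
    simp only [mem_coe, mem_filter, mem_univ, true_and] at hc₁ hc₂
    refine sub_eq_zero.mp (eq_zero_of_mem_checkCode_of_eq_zero_off_pair (hv hjk) hjk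
      (sub_mem hc₁.1 hc₂.1) fun i hij hik => ?_)
    simpa [hij, hik, sub_eq_zero] using congrFun h i
  · intro w hw
    simp only [mem_coe, mem_filter, mem_univ, true_and, mem_insert] at hw
    obtain ⟨c, hc, hcw⟩ := exists_mem_checkCode_eq_off_pair hV (hv hjk) w
    refine ⟨c, ?_, funext fun i => ?_⟩
    · simp only [mem_coe, mem_filter, mem_univ, true_and]
      refine ⟨hc, fun i hi => ?_⟩
      rw [hcw i (by rintro rfl; exact hj hi) (by rintro rfl; exact hk hi), hw i (by tauto)]
    · dsimp only
      by_cases h : i = j ∨ i = k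
      · rw [if_pos h, hw i (by tauto)]
      · rw [if_neg h, hcw i (fun h' => h (.inl h')) (fun h' => h (.inr h'))]

open Classical in
theorem card_vanishing_checkCode (hV : Module.finrank F V = 2)
    (hv : Pairwise fun j k => LinearIndependent F ![v j, v k]) (hι : 2 ≤ Fintype.card ι)
    (Z : Finset ι) :
    #{c : ι → F | c ∈ checkCode F v ∧ ∀ i ∈ Z, c i = 0} =
      Fintype.card F ^ (Fintype.card ι - 2 - #Z) := by
  by_cases hZ : #Z + 2 ≤ Fintype.card ι
  · exact card_vanishing_checkCode_of_card_add_two_le hV hv hZ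
  -- the exponent truncates to `0`: only the zero codeword vanishes on `Z`
  obtain ⟨Y, hYZ, hY⟩ := exists_subset_card_eq (show Fintype.card ι - 2 ≤ #Z by omega)
  have hcardY := card_vanishing_checkCode_of_card_add_two_le hV hv (Z := Y) (by omega)
  rw [show Fintype.card ι - 2 - #Y = 0 by omega, pow_zero] at hcardY
  rw [show Fintype.card ι - 2 - #Z = 0 by omega, pow_zero]
  refine le_antisymm (hcardY ▸ card_le_card fun c hc => ?_) (one_le_card.mpr ⟨0, by simp⟩)
  simp only [mem_filter, mem_univ, true_and] at hc ⊢
  exact ⟨hc.1, fun i hi => hc.2 i (hYZ hi)⟩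

open Classical in
theorem card_checkCode (hV : Module.finrank F V = 2)
    (hv : Pairwise fun j k => LinearIndependent F ![v j, v k]) (hι : 2 ≤ Fintype.card ι) :
    #{c : ι → F | c ∈ checkCode F v} = Fintype.card F ^ (Fintype.card ι - 2) := by
  simpa using card_vanishing_checkCode hV hv hι ∅

theorem finrank_checkCode (hV : Module.finrank F V = 2)
    (hv : Pairwise fun j k => LinearIndependent F ![v j, v k]) (hι : 2 ≤ Fintype.card ι) :
    Module.finrank F (checkCode F v) = Fintype.card ι - 2 := by
  classical
  refine Nat.pow_right_injective (Fintype.one_lt_card (α := F)) ?_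
  dsimp only
  rw [← Module.card_eq_pow_finrank, ← card_checkCode hV hv hι, Fintype.card_subtype]

end CheckCode

theorem mem_cyclicCode_X_sub_C_mul_X_sub_C_iff {F : Type} [Field F] {n : ℕ} {a b : F}
    (hab : a ≠ b) (ha : a ^ n = 1) (hb : b ^ n = 1) (c : Fin n → F) :
    c ∈ cyclicCode F n ((X - C a) * (X - C b)) ↔
      ∑ i, c i * a ^ (i : ℕ) = 0 ∧ ∑ i, c i * b ^ (i : ℕ) = 0 := by
  have hdvd : (X - C a) * (X - C b) ∣ X ^ n - 1 :=
    (X_sub_C_mul_X_sub_C_dvd_iff hab).mpr ⟨by simp [ha], by simp [hb]⟩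
  rw [cyclicCode, Set.mem_ofPred_eq, Ideal.Quotient.mk_mem_span_singleton_mk_iff hdvd,
    X_sub_C_mul_X_sub_C_dvd_iff hab]
  simp [eval_finsetSum]

theorem cyclicCode_X_sub_C_mul_X_sub_C {F : Type} [Field F] {n : ℕ} {a b : F} (hab : a ≠ b)
    (ha : a ^ n = 1) (hb : b ^ n = 1) :
    cyclicCode F n ((X - C a) * (X - C b)) =
      checkCode F fun i : Fin n => (a ^ (i : ℕ), b ^ (i : ℕ)) := by
  ext c
  rw [mem_cyclicCode_X_sub_C_mul_X_sub_C_iff hab ha hb, SetLike.mem_coe, mem_checkCode]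
  simp [Prod.ext_iff, Prod.fst_sum, Prod.snd_sum]

section WeightDistribution

variable {F ι V : Type*} [Field F] [Fintype F] [DecidableEq F] [Fintype ι] [DecidableEq ι]
  [AddCommGroup V] [Module F V] {v : ι → V}

open Classical in
theorem sum_card_hammingNorm_mul_choose_checkCode (hV : Module.finrank F V = 2)
    (hv : Pairwise fun j k => LinearIndependent F ![v j, v k]) (hι : 2 ≤ Fintype.card ι) (t : ℕ) :
    ∑ w ∈ range (Fintype.card ι + 1),
        #{c : ι → F | c ∈ checkCode F v ∧ hammingNorm c = w} * (Fintype.card ι - w).choose t =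
      (Fintype.card ι).choose t * Fintype.card F ^ (Fintype.card ι - 2 - t) := by
  set s : Finset (ι → F) := {c | c ∈ checkCode F v}
  calc _ = ∑ c ∈ s, (Fintype.card ι - hammingNorm c).choose t := by
        rw [sum_comp_hammingNorm s fun w => (Fintype.card ι - w).choose t]
        simp only [s, filter_filter]
    _ = ∑ Z ∈ powersetCard t univ, #{c ∈ s | ∀ i ∈ Z, c i = 0} :=
        (sum_card_vanishing_powersetCard s t).symm
    _ = _ := by
        rw [sum_congr rfl fun Z hZ => by
          rw [filter_filter, card_vanishing_checkCode hV hv hι, (mem_powersetCard.mp hZ).2],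
          sum_const, card_powersetCard, card_univ, smul_eq_mul]

theorem ncard_hammingNorm_checkCode_of_card_eq_five (hV : Module.finrank F V = 2)
    (hv : Pairwise fun j k => LinearIndependent F ![v j, v k]) (hι : Fintype.card ι = 5) :
    (Set.ncard {c ∈ (checkCode F v : Set (ι → F)) | hammingNorm c = 0} : ℤ) = 1 ∧
      (Set.ncard {c ∈ (checkCode F v : Set (ι → F)) | hammingNorm c = 1} : ℤ) = 0 ∧
      (Set.ncard {c ∈ (checkCode F v : Set (ι → F)) | hammingNorm c = 2} : ℤ) = 0 ∧
      (Set.ncard {c ∈ (checkCode F v : Set (ι → F)) | hammingNorm c = 3} : ℤ) =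
        10 * ((Fintype.card F : ℤ) - 1) ∧
      (Set.ncard {c ∈ (checkCode F v : Set (ι → F)) | hammingNorm c = 4} : ℤ) =
        5 * ((Fintype.card F : ℤ) - 1) * ((Fintype.card F : ℤ) - 3) ∧
      (Set.ncard {c ∈ (checkCode F v : Set (ι → F)) | hammingNorm c = 5} : ℤ) =
        ((Fintype.card F : ℤ) - 1) * ((Fintype.card F : ℤ) ^ 2 - 4 * Fintype.card F + 6) := by
  classical
  have hncard : ∀ w, Set.ncard {c ∈ (checkCode F v : Set (ι → F)) | hammingNorm c = w} =
      #{c : ι → F | c ∈ checkCode F v ∧ hammingNorm c = w} := fun w => by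
    rw [← Set.ncard_coe_finset]; congr 1; ext; simp
  obtain ⟨A, hA⟩ : ∃ A : ℕ → ℕ,
      ∀ w, #{c : ι → F | c ∈ checkCode F v ∧ hammingNorm c = w} = A w := ⟨_, fun _ => rfl⟩
  simp only [hncard, hA]
  have E := sum_card_hammingNorm_mul_choose_checkCode hV hv (by omega)
  simp only [hι, hA, sum_range_succ, sum_range_zero] at E
  have E₀ := E 0; have E₁ := E 1; have E₂ := E 2; have E₃ := E 3; have E₄ := E 4; have E₅ := E 5
  norm_num [Nat.choose] at E₀ E₁ E₂ E₃ E₄ E₅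
  have h₁ : A 1 = 0 := by omega
  have h₂ : A 2 = 0 := by omega
  simp only [E₅, h₁, h₂] at E₀ E₁ E₂ ⊢
  zify at E₀ E₁ E₂
  refine ⟨by simp, by simp, by simp, by linear_combination E₂, by linear_combination E₁ - 2 * E₂,
    by linear_combination E₀ - E₁ + E₂⟩

end WeightDistribution

theorem stmt_9_general (q : ℕ)
    (F : Type) [Field F] [Fintype F] [DecidableEq F] (hF : Fintype.card F = q)
    (ω : F) (hω : IsPrimitiveRoot ω 5)
    (u₁ u₂ : ℕ) (h12 : u₁ < u₂) (h2 : u₂ ≤ 4)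
    (Ccode : Set (Fin 5 → F))
    (hC : Ccode = cyclicCode F 5 ((X - C (ω ^ u₁)) * (X - C (ω ^ u₂)))) :
    Module.finrank F (Submodule.span F Ccode) = 3 ∧
      (Set.ncard {c ∈ Ccode | hammingNorm c = 0} : ℤ) = 1 ∧
      (∀ i, 0 < i → i < 3 → (Set.ncard {c ∈ Ccode | hammingNorm c = i} : ℤ) = 0) ∧
      (Set.ncard {c ∈ Ccode | hammingNorm c = 3} : ℤ) = 10 * ((q : ℤ) - 1) ∧
      (Set.ncard {c ∈ Ccode | hammingNorm c = 4} : ℤ) = 5 * ((q : ℤ) - 1) * ((q : ℤ) - 3) ∧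
      (Set.ncard {c ∈ Ccode | hammingNorm c = 5} : ℤ) =
        ((q : ℤ) - 1) * ((q : ℤ) ^ 2 - 4 * q + 6) ∧
      sInf {w | ∃ c ∈ Ccode, c ≠ 0 ∧ hammingNorm c = w} = 3 := by
  have : Fact (Nat.Prime 5) := ⟨by norm_num⟩
  have hroot : ∀ u, (ω ^ u) ^ 5 = 1 := fun u => by
    rw [← pow_mul, mul_comm, pow_mul, hω.pow_eq_one, one_pow]
  have hu : (u₁ : ZMod 5) ≠ u₂ := by
    rw [Ne, ZMod.natCast_eq_natCast_iff']; omega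
  set v : Fin 5 → F × F := fun i => ((ω ^ u₁) ^ (i : ℕ), (ω ^ u₂) ^ (i : ℕ))
  have hv : Pairwise fun j k => LinearIndependent F ![v j, v k] := fun j k hjk =>
    linearIndependent_pair_of_mul_ne <| hω.pow_pow_mul_pow_pow_ne (j := j) (k := k) hu <| by
      rw [Ne, ZMod.natCast_eq_natCast_iff']; omega
  have hCv : Ccode = checkCode F v := hC.trans <| cyclicCode_X_sub_C_mul_X_sub_C
    (fun h => h12.ne (hω.pow_inj (by omega) (by omega) h)) (hroot u₁) (hroot u₂)
  have hV : Module.finrank F (F × F) = 2 := by simp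
  obtain ⟨A₀, A₁, A₂, A₃, A₄, A₅⟩ := ncard_hammingNorm_checkCode_of_card_eq_five hV hv (by simp)
  subst hCv hF
  refine ⟨by rw [Submodule.span_eq, finrank_checkCode hV hv (by simp)]; rfl, A₀,
    fun i hi₀ hi₃ => by interval_cases i; exacts [A₁, A₂], A₃, A₄, A₅,
    sInf_hammingNorm_eq (by norm_num) (fun w hw₀ hw₃ => by interval_cases w <;> omega) ?_⟩
  have := Fintype.one_lt_card (α := F)
  omega

theorem stmt_9 (p m q : ℕ) (hp : p.Prime) (hm : 0 < m) (hq : q = p ^ m)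
    (F : Type) [Field F] [Fintype F] [DecidableEq F] (hF : Fintype.card F = q)
    (h5 : 5 ∣ q - 1) (ω : F) (hω : IsPrimitiveRoot ω 5)
    (u₁ u₂ : ℕ) (h12 : u₁ < u₂) (h2 : u₂ ≤ 4)
    (Ccode : Set (Fin 5 → F))
    (hC : Ccode = cyclicCode F 5 ((X - C (ω ^ u₁)) * (X - C (ω ^ u₂)))) :
    Module.finrank F (Submodule.span F Ccode) = 3 ∧
      (Set.ncard {c ∈ Ccode | hammingNorm c = 0} : ℤ) = 1 ∧
      (∀ i, 0 < i → i < 3 → (Set.ncard {c ∈ Ccode | hammingNorm c = i} : ℤ) = 0) ∧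
      (Set.ncard {c ∈ Ccode | hammingNorm c = 3} : ℤ) = 10 * ((q : ℤ) - 1) ∧
      (Set.ncard {c ∈ Ccode | hammingNorm c = 4} : ℤ) = 5 * ((q : ℤ) - 1) * ((q : ℤ) - 3) ∧
      (Set.ncard {c ∈ Ccode | hammingNorm c = 5} : ℤ) =
        ((q : ℤ) - 1) * ((q : ℤ) ^ 2 - 4 * q + 6) ∧
      sInf {w | ∃ c ∈ Ccode, c ≠ 0 ∧ hammingNorm c = w} = 3 :=
  stmt_9_general q F hF ω hω u₁ u₂ h12 h2 Ccode hC
end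

section
/- Let p be a prime, s ≥ 1, and for 0 ≤ t ≤ p^s - 1 with base-p digits t = Σ_{m=0}^{s-1} t_m p^m define P_t = Π_{m=0}^{s-1} (t_m + 1). Let β, τ be integers with 0 ≤ β ≤ p-2 and 0 ≤ τ ≤ s-1, and let l be an integer with p^s - p^{s-τ} + β p^{s-τ-1} + 1 ≤ l ≤ p^s - p^{s-τ} + (β+1) p^{s-τ-1}. Then min{P_t : l ≤ t ≤ p^s - 1} = (β+2) p^τ. -/
private lemma dvd_of_digits_zero (p t : ℕ) (hp : 0 < p) :
    ∀ m, (∀ i < m, t / p ^ i % p = 0) → p ^ m ∣ t := by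
  intro m
  induction m with
  | zero => simp
  | succ n ih =>
    intro h
    obtain ⟨c, hc⟩ := ih fun i hi => h i (by omega)
    have hpn : 0 < p ^ n := pow_pos hp n
    have h2 : t / p ^ n % p = 0 := h n (by omega)
    rw [hc, Nat.mul_div_cancel_left _ hpn] at h2
    obtain ⟨d, hd⟩ := Nat.dvd_of_mod_eq_zero h2
    exact ⟨d, by rw [hc, hd, pow_succ]; ring⟩

theorem stmt_11 (p s : ℕ) (hp : p.Prime) (hs : 1 ≤ s)
    (β τ : ℕ) (hβ : β ≤ p - 2) (hτ : τ ≤ s - 1)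
    (l : ℕ)
    (hl1 : p ^ s - p ^ (s - τ) + β * p ^ (s - τ - 1) + 1 ≤ l)
    (hl2 : l ≤ p ^ s - p ^ (s - τ) + (β + 1) * p ^ (s - τ - 1)) :
    sInf {w | ∃ t, l ≤ t ∧ t ≤ p ^ s - 1 ∧
        w = ∏ i ∈ Finset.range s, (t / p ^ i % p + 1)} = (β + 2) * p ^ τ := by
  have hp2 : 2 ≤ p := hp.two_le
  have hp0 : 0 < p := by omega
  have hτs : τ < s := by omega
  set a := p ^ τ with hadef
  set c := p ^ (s - τ - 1) with hcdef
  have hc0 : 0 < c := pow_pos hp0 _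
  have ha1 : 1 ≤ a := Nat.one_le_pow _ _ hp0
  have hkc : p ^ (s - τ) = p * c := by
    rw [hcdef, ← pow_succ']
    congr 1
    omega
  have hsac : p ^ s = a * (p * c) := by
    rw [hadef, hcdef, ← pow_succ', ← pow_add]
    congr 1
    omega
  have hs1 : 1 ≤ p ^ s := Nat.one_le_pow _ _ hp0
  have hap : a * p = (a - 1) * p + p := by
    conv_lhs => rw [show a = a - 1 + 1 by omega]
    rw [Nat.add_mul, one_mul]
  have key : ∀ b : ℕ, p ^ s - p ^ (s - τ) + b * c = ((a - 1) * p + b) * c := by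
    intro b
    rw [hsac, hkc]
    have h1 : a * (p * c) - p * c = (a - 1) * (p * c) := by
      rw [Nat.sub_mul, one_mul]
    rw [h1]
    ring
  rw [key] at hl1 hl2
  -- top digits are p - 1
  have top_digit : ∀ t : ℕ, (a - 1) * p * c ≤ t → t < p ^ s → ∀ j < τ,
      t / p ^ (s - τ + j) % p = p - 1 := by
    intro t ht1 ht2 j hj
    have hMi : p ^ s = p ^ (τ - j) * p ^ (s - τ + j) := by
      rw [← pow_add]
      congr 1
      omega
    have hM1 : 1 ≤ p ^ (τ - j) := Nat.one_le_pow _ _ hp0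
    have hdiv : t / p ^ (s - τ + j) = p ^ (τ - j) - 1 := by
      apply Nat.div_eq_of_lt_le
      · have e1 : (p ^ (τ - j) - 1) * p ^ (s - τ + j) = p ^ s - p ^ (s - τ + j) := by
          rw [hMi, Nat.sub_mul, one_mul]
        have e2 : p ^ (s - τ) ≤ p ^ (s - τ + j) := Nat.pow_le_pow_right hp0 (by omega)
        have e3 : p ^ s - p ^ (s - τ + j) ≤ p ^ s - p ^ (s - τ) := Nat.sub_le_sub_left e2 _
        have e4 : p ^ s - p ^ (s - τ) = (a - 1) * p * c := by
          have := key 0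
          simpa using this
        rw [e1]
        omega
      · rw [show p ^ (τ - j) - 1 + 1 = p ^ (τ - j) by omega, ← hMi]
        exact ht2
    rw [hdiv]
    have hMN : p ^ (τ - j) = p * p ^ (τ - j - 1) := by
      rw [← pow_succ']
      congr 1
      omega
    obtain ⟨N', hN'⟩ : ∃ N', p ^ (τ - j - 1) = N' + 1 :=
      ⟨p ^ (τ - j - 1) - 1, by have := Nat.one_le_pow (τ - j - 1) p hp0; omega⟩
    rw [hMN, hN', Nat.mul_add, mul_one, Nat.add_sub_assoc (by omega),
      Nat.mul_add_mod, Nat.mod_eq_of_lt (by omega)]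
  -- product of top digits
  have prod_top : ∀ t : ℕ, (a - 1) * p * c ≤ t → t < p ^ s →
      ∏ j ∈ Finset.range τ, (t / p ^ (s - τ + j) % p + 1) = a := by
    intro t ht1 ht2
    rw [Finset.prod_congr rfl (fun j hj => by
      rw [top_digit t ht1 ht2 j (Finset.mem_range.mp hj)])]
    rw [Finset.prod_const, Finset.card_range, hadef]
    congr 1
    omega
  have hsplit : ∀ t : ℕ, ∏ i ∈ Finset.range s, (t / p ^ i % p + 1) =
      (∏ i ∈ Finset.range (s - τ), (t / p ^ i % p + 1)) *
      ∏ j ∈ Finset.range τ, (t / p ^ (s - τ + j) % p + 1) := by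
    intro t
    have := Finset.prod_range_add (fun i => t / p ^ i % p + 1) (s - τ) τ
    rw [show s - τ + τ = s by omega] at this
    exact this
  -- the witness
  set t0 := ((a - 1) * p + (β + 1)) * c with ht0
  have ht0q : t0 / c = (a - 1) * p + (β + 1) := Nat.mul_div_cancel _ hc0
  have ht0top : t0 + c ≤ p ^ s := by
    have h1 : t0 + c = ((a - 1) * p + (β + 1) + 1) * c := by rw [ht0]; ring
    have h2 : (a - 1) * p + (β + 1) + 1 ≤ a * p := by omega
    calc t0 + c = ((a - 1) * p + (β + 1) + 1) * c := h1
      _ ≤ (a * p) * c := Nat.mul_le_mul_right c h2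
      _ = p ^ s := by rw [hsac]; ring
  have ht0lt : t0 < p ^ s := by omega
  have ht0le : t0 ≤ p ^ s - 1 := by omega
  have ht0ge : (a - 1) * p * c ≤ t0 := Nat.mul_le_mul_right c (by omega)
  have hlt0 : l ≤ t0 := hl2
  -- lower-part product at t0
  have low_t0 : ∏ i ∈ Finset.range (s - τ), (t0 / p ^ i % p + 1) = β + 2 := by
    rw [show s - τ = (s - τ - 1) + 1 by omega, Finset.prod_range_succ]
    have hlast : t0 / p ^ (s - τ - 1) % p = β + 1 := by
      rw [← hcdef, ht0q, add_comm, Nat.add_mul_mod_self_right,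
        Nat.mod_eq_of_lt (by omega)]
    have hzero : ∀ i ∈ Finset.range (s - τ - 1), t0 / p ^ i % p + 1 = 1 := by
      intro i hi
      have hi' : i < s - τ - 1 := Finset.mem_range.mp hi
      have hdvd : p ^ (i + 1) ∣ t0 := by
        have h1 : p ^ (i + 1) ∣ c := by
          rw [hcdef]
          exact pow_dvd_pow p (by omega)
        exact Dvd.dvd.mul_left h1 _
      have h2 : p ∣ t0 / p ^ i := by
        rw [Nat.dvd_div_iff_mul_dvd (dvd_trans (pow_dvd_pow p (by omega)) hdvd)]
        rw [← pow_succ]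
        exact hdvd
      obtain ⟨d, hd⟩ := h2
      rw [hd, Nat.mul_mod_right]
    rw [Finset.prod_congr rfl hzero, Finset.prod_const_one, one_mul, hlast]
  have prod_t0 : ∏ i ∈ Finset.range s, (t0 / p ^ i % p + 1) = (β + 2) * a := by
    rw [hsplit, low_t0, prod_top t0 ht0ge ht0lt]
  -- lower bound for any t in the set
  have low_bound : ∀ t : ℕ, ((a - 1) * p + β) * c + 1 ≤ t → t < p ^ s →
      β + 2 ≤ ∏ i ∈ Finset.range (s - τ), (t / p ^ i % p + 1) := by
    intro t ht1 ht2
    have hq1 : (a - 1) * p + β ≤ t / c :=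
      (Nat.le_div_iff_mul_le hc0).mpr (by omega)
    have hq2 : t / c < a * p := by
      apply Nat.div_lt_iff_lt_mul hc0 |>.mpr
      calc t < p ^ s := ht2
        _ = a * p * c := by rw [hsac]; ring
    have he2 : t / c - (a - 1) * p < p := by omega
    have hd : t / c % p = t / c - (a - 1) * p := by
      conv_lhs => rw [show t / c = (t / c - (a - 1) * p) + (a - 1) * p by omega]
      rw [Nat.add_mul_mod_self_right, Nat.mod_eq_of_lt he2]
    have hall1 : ∀ i ∈ Finset.range (s - τ), 1 ≤ t / p ^ i % p + 1 :=
      fun i _ => Nat.le_add_left 1 _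
    have hmemlast : s - τ - 1 ∈ Finset.range (s - τ) := Finset.mem_range.mpr (by omega)
    rcases Nat.lt_or_ge β (t / c - (a - 1) * p) with hcase | hcase
    · -- top low-digit is ≥ β + 1
      have hfac : β + 2 ≤ t / p ^ (s - τ - 1) % p + 1 := by
        rw [← hcdef, hd]
        omega
      calc β + 2 ≤ t / p ^ (s - τ - 1) % p + 1 := hfac
        _ ≤ _ := Finset.single_le_prod' hall1 hmemlast
    · -- digit equals β; some lower digit is nonzero
      have heβ : t / c - (a - 1) * p = β := by omega
      have hqc : t / c = (a - 1) * p + β := by omega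
      have hmodpos : ¬ p ^ (s - τ - 1) ∣ t := by
        intro hdvd
        have h4 : c * (t / c) = t := Nat.mul_div_cancel' (hcdef ▸ hdvd)
        rw [hqc] at h4
        have h5 : t = ((a - 1) * p + β) * c := by rw [← h4, mul_comm]
        rw [h5] at ht1
        exact Nat.not_succ_le_self _ ht1
      have hex : ∃ i < s - τ - 1, t / p ^ i % p ≠ 0 := by
        by_contra hcon
        push_neg at hcon
        exact hmodpos (dvd_of_digits_zero p t hp0 (s - τ - 1) hcon)
      obtain ⟨i, hi, hdig⟩ := hex
      have hne : i ≠ s - τ - 1 := by omega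
      have hsub : ({i, s - τ - 1} : Finset ℕ) ⊆ Finset.range (s - τ) := by
        intro x hx
        simp only [Finset.mem_insert, Finset.mem_singleton] at hx
        rcases hx with rfl | rfl <;> exact Finset.mem_range.mpr (by omega)
      have hpair : ∏ j ∈ ({i, s - τ - 1} : Finset ℕ), (t / p ^ j % p + 1) =
          (t / p ^ i % p + 1) * (t / p ^ (s - τ - 1) % p + 1) :=
        Finset.prod_pair hne
      have hfac1 : 2 ≤ t / p ^ i % p + 1 := by omega
      have hfac2 : t / p ^ (s - τ - 1) % p + 1 = β + 1 := by
        rw [← hcdef, hd, heβ]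
      calc β + 2 ≤ 2 * (β + 1) := by omega
        _ ≤ (t / p ^ i % p + 1) * (t / p ^ (s - τ - 1) % p + 1) := by
            rw [hfac2]; exact Nat.mul_le_mul_right _ hfac1
        _ = ∏ j ∈ ({i, s - τ - 1} : Finset ℕ), (t / p ^ j % p + 1) := hpair.symm
        _ ≤ _ := Finset.prod_le_prod_of_subset_of_one_le' hsub
            (fun j hj _ => Nat.le_add_left 1 _)
  -- assemble
  have hmem : (β + 2) * a ∈ {w | ∃ t, l ≤ t ∧ t ≤ p ^ s - 1 ∧
      w = ∏ i ∈ Finset.range s, (t / p ^ i % p + 1)} :=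
    ⟨t0, hlt0, ht0le, prod_t0.symm⟩
  apply le_antisymm
  · exact Nat.sInf_le hmem
  · apply le_csInf ⟨_, hmem⟩
    rintro w ⟨t, htl, htu, rfl⟩
    have ht1 : ((a - 1) * p + β) * c + 1 ≤ t := le_trans hl1 htl
    have ht2 : t < p ^ s := by omega
    have htge : (a - 1) * p * c ≤ t := by
      calc (a - 1) * p * c ≤ ((a - 1) * p + β) * c := Nat.mul_le_mul_right c (by omega)
        _ ≤ t := by omega
    rw [hsplit t, prod_top t htge ht2]
    exact Nat.mul_le_mul (low_bound t ht1 ht2) le_rfl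
end

section
/- Let p ≥ 7 be a prime, q = p^m with 5 ∤ (q^2-1), s ≥ 1, and let C be the cyclic code of length 5p^s over F_q generated by (x-1)^i with 0 < i ≤ p^s (and the factor φ_5(x) = x^4+x^3+x^2+x+1 appearing with exponent 0). Then the minimum Hamming distance of C equals 2. -/
open Polynomial

/-!
Every codeword is a multiple of `x - 1` modulo `xⁿ - 1`, so its coordinates sum to zero
(evaluate at `x = 1`); hence no codeword has weight one. Conversely, in characteristic `p`,
`(x - 1) ^ i` divides `(x - 1) ^ (p ^ s) = x ^ (p ^ s) - 1`, a codeword of weight two.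
-/

open Finset

theorem two_le_hammingNorm_of_sum_eq_zero {ι M : Type*} [Fintype ι] [AddCommMonoid M]
    [DecidableEq M] {c : ι → M} (hc : c ≠ 0) (hsum : ∑ j, c j = 0) :
    2 ≤ hammingNorm c := by
  by_contra! hlt
  have hone : hammingNorm c = 1 := by
    have := hammingNorm_pos_iff.mpr hc
    omega
  obtain ⟨j, hj⟩ := card_eq_one.mp hone
  have hsupp (k : ι) : c k ≠ 0 ↔ k = j := by
    simpa using congrArg (k ∈ ·) hj
  have hcj : c j ≠ 0 := (hsupp j).mpr rfl
  have hrest (k : ι) (hk : k ≠ j) : c k = 0 := not_not.mp (mt (hsupp k).mp hk)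
  exact hcj (by rwa [sum_eq_single j (fun k _ hk => hrest k hk) (by simp)] at hsum)

namespace Polynomial

variable {R : Type*} [Semiring R]

def coeffVec (n : ℕ) (f : R[X]) : Fin n → R := fun j => f.coeff j

theorem sum_coeffVec_mul_X_pow {n : ℕ} {f : R[X]} (hf : f.natDegree < n) :
    ∑ j : Fin n, C (coeffVec n f j) * X ^ (j : ℕ) = f := by
  simp only [coeffVec]
  rw [Fin.sum_univ_eq_sum_range (fun j => C (f.coeff j) * X ^ j) n]
  exact (f.as_sum_range_C_mul_X_pow' hf).symm

theorem hammingNorm_coeffVec [DecidableEq R] {n : ℕ} {f : R[X]} (hf : f.natDegree < n) :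
    hammingNorm (coeffVec n f) = #f.support := by
  refine card_bij (fun j _ => (j : ℕ))
    (fun j hj => by simpa [coeffVec] using (mem_filter.mp hj).2)
    (fun _ _ _ _ h => Fin.ext h) (fun k hk => ?_)
  have hk' : f.coeff k ≠ 0 := mem_support_iff.mp hk
  exact ⟨⟨k, (le_natDegree_of_ne_zero hk').trans_lt hf⟩,
    mem_filter.mpr ⟨mem_univ _, hk'⟩, rfl⟩

end Polynomial

section CyclicCode

variable {F : Type} [Field F]

theorem coeffVec_mem_cyclicCode {n : ℕ} {g f : F[X]} (hgf : g ∣ f) (hf : f.natDegree < n) :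
    coeffVec n f ∈ cyclicCode F n g := by
  obtain ⟨h, rfl⟩ := hgf
  simp only [cyclicCode, Set.mem_ofPred_eq, sum_coeffVec_mul_X_pow hf, map_mul]
  exact Ideal.mul_mem_right _ _ (Ideal.mem_span_singleton_self _)

theorem sum_eq_zero_of_mem_cyclicCode {n : ℕ} {g : F[X]} (hg : g.IsRoot 1) {c : Fin n → F}
    (hc : c ∈ cyclicCode F n g) : ∑ j, c j = 0 := by
  let ev := Ideal.Quotient.lift (Ideal.span {(X : F[X]) ^ n - 1}) (evalRingHom 1) fun a ha => by
    obtain ⟨k, rfl⟩ := Ideal.mem_span_singleton'.mp ha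
    simp
  have hker : Ideal.span {Ideal.Quotient.mk _ g} ≤ RingHom.ker ev :=
    (Ideal.span_singleton_le_iff_mem _).mpr (by simpa [ev] using hg)
  simpa [ev, eval_finsetSum] using hker hc

theorem sInf_hammingNorm_cyclicCode_X_sub_one_pow [DecidableEq F] (p : ℕ) [ExpChar F p]
    {n s i : ℕ} (hi0 : 0 < i) (hi : i ≤ p ^ s) (hn : p ^ s < n) :
    sInf {w | ∃ c ∈ cyclicCode F n ((X - 1) ^ i), c ≠ 0 ∧ hammingNorm c = w} = 2 := by
  set f : F[X] := X ^ p ^ s - 1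
  have hfdeg : f.natDegree = p ^ s := by
    simpa using natDegree_X_pow_sub_C (n := p ^ s) (r := (1 : F))
  have hdvd : (X - 1) ^ i ∣ f := by
    rw [show f = (X - 1) ^ p ^ s by simp [f, sub_pow_expChar_pow]]
    exact pow_dvd_pow _ hi
  have hweight : hammingNorm (coeffVec n f) = 2 := by
    rw [hammingNorm_coeffVec (hfdeg ▸ hn),
      ← card_support_binomial (expChar_pow_pos F p s).ne' one_ne_zero
        (neg_ne_zero.mpr (one_ne_zero (α := F))) (k := p ^ s) (m := 0)]
    simp [f, sub_eq_add_neg]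
  refine IsLeast.csInf_eq
    ⟨⟨_, coeffVec_mem_cyclicCode hdvd (hfdeg ▸ hn), ?_, hweight⟩, ?_⟩
  · exact hammingNorm_ne_zero_iff.mp (by omega)
  · rintro w ⟨c, hc, hc0, rfl⟩
    exact two_le_hammingNorm_of_sum_eq_zero hc0
      (sum_eq_zero_of_mem_cyclicCode (by simp [IsRoot, hi0.ne']) hc)

end CyclicCode

theorem stmt_12_general (p m q s : ℕ) (hp : p.Prime) (hq : q = p ^ m)
    (F : Type) [Field F] [Fintype F] [DecidableEq F] (hF : Fintype.card F = q)
    (i : ℕ) (hi0 : 0 < i) (hi : i ≤ p ^ s) :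
    sInf {w | ∃ c ∈ cyclicCode F (5 * p ^ s) ((X - 1) ^ i),
        c ≠ 0 ∧ hammingNorm c = w} = 2 := by
  have : Fact p.Prime := ⟨hp⟩
  have : CharP F p := charP_of_card_eq_prime_pow (hF.trans hq)
  have hps : 0 < p ^ s := pow_pos hp.pos s
  exact sInf_hammingNorm_cyclicCode_X_sub_one_pow p hi0 hi (by omega)

theorem stmt_12 (p m q s : ℕ) (hp : p.Prime) (hp7 : 7 ≤ p) (hm : 0 < m) (hq : q = p ^ m)
    (hs : 1 ≤ s) (h5 : ¬ (5 ∣ q ^ 2 - 1))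
    (F : Type) [Field F] [Fintype F] [DecidableEq F] (hF : Fintype.card F = q)
    (i : ℕ) (hi0 : 0 < i) (hi : i ≤ p ^ s) :
    sInf {w | ∃ c ∈ cyclicCode F (5 * p ^ s) ((X - 1) ^ i),
        c ≠ 0 ∧ hammingNorm c = w} = 2 :=
  stmt_12_general p m q s hp hq F hF i hi0 hi
end

section
/- Let p ≥ 7 be a prime, q = p^m with 5 | (q+1) and 5 ∤ (q-1), s ≥ 1. Let C = ⟨(x-1)^i f_1(x)^j⟩ be the cyclic code of length 5p^s over F_q, where f_1(x) is one of the irreducible quadratic factors of x^5-1 over F_q, and suppose 2p^{s-1} < i ≤ p^s and 0 < j ≤ p^s. Then the minimum Hamming distance of C equals 4. -/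
/-!
Let `ζ` be a root of `f₁`, a primitive fifth root of unity. Since `q ≡ -1 (mod 5)`, the
Frobenius conjugate `ζ ^ q = ζ⁻¹` is a root of `f₁` as well. A nonzero codeword is a polynomial
`Q` of degree `< 5 p ^ s` divisible by `(X - 1) ^ i` and vanishing at `ζ` and `ζ⁻¹`. If `Q` had at
most three terms, then after removing a power of `X`, evaluating at `1`, `ζ`, `ζ⁻¹` forces all its
exponents to be multiples of `5`, hence not multiples of `p ^ s`. But a binomial `δ + ε X ^ K`
vanishes at `1` to order at most `p ^ v` when `p ^ (v + 1) ∤ K`, and a trinomial to order at most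
`p ^ u + p ^ v` under the analogous conditions on `E - D` and `E` (peel off `p`-th powers with
`expand`, then differentiate), so `(X - 1) ^ i` with `i > 2 p ^ (s - 1)` cannot divide `Q`. The
bound is attained by `((X - 1) f₁) ^ (p ^ s)`, which in characteristic `p` has no more terms than
`(X - 1) f₁`.
-/

open Polynomial

lemma eq_one_and_eq_one_of_conj_relations {K : Type*} [Field K] {x y z a b : K} (hx : x ≠ 0)
    (hy : y ≠ 0) (hz : z ≠ 0) (ha : a ≠ 0) (hb : b ≠ 0) (h₀ : x + y + z = 0)
    (h₁ : x + y * a + z * b = 0) (h₂ : x + y * a⁻¹ + z * b⁻¹ = 0) : a = 1 ∧ b = 1 := by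
  have h₂' : x * a * b + y * b + z * a = 0 := by
    field_simp at h₂
    linear_combination h₂
  have key : z * (b - 1) * (b - a) = 0 := by
    linear_combination h₂' - a * b * h₀ + b * (h₁ - h₀)
  rcases mul_eq_zero.mp key with hzb | hba
  · have hb1 : b = 1 := sub_eq_zero.mp ((mul_eq_zero.mp hzb).resolve_left hz)
    subst hb1
    have : y * (a - 1) = 0 := by linear_combination h₁ - h₀
    exact ⟨sub_eq_zero.mp ((mul_eq_zero.mp this).resolve_left hy), rfl⟩
  · have hab : b = a := sub_eq_zero.mp hba
    subst hab
    have : -x * (b - 1) = 0 := by linear_combination h₁ - b * h₀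
    have hb1 := sub_eq_zero.mp ((mul_eq_zero.mp this).resolve_left (neg_ne_zero.mpr hx))
    exact ⟨hb1, hb1⟩

lemma Nat.not_pow_succ_dvd_of_dvd_of_lt {n p t D : ℕ} (hnp : n.Coprime p) (hD : 0 < D)
    (hnD : n ∣ D) (hDlt : D < n * p ^ (t + 1)) : ¬ p ^ (t + 1) ∣ D := fun h =>
  hDlt.not_ge (Nat.le_of_dvd hD ((hnp.pow_right _).mul_dvd_of_dvd_of_dvd hnD h))

lemma Nat.coprime_of_dvd_pow_add_one {ℓ p m : ℕ} (hℓ : ℓ.Prime) (hℓ2 : ℓ ≠ 2) (hp : p.Prime)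
    (h : ℓ ∣ p ^ m + 1) : ℓ.Coprime p := by
  refine (Nat.coprime_primes hℓ hp).mpr fun hℓp => ?_
  subst hℓp
  rcases m with _ | m
  · exact hℓ2 ((Nat.prime_dvd_prime_iff_eq hℓ Nat.prime_two).mp h)
  · exact hℓ.one_lt.ne' (Nat.dvd_one.mp ((Nat.dvd_add_right (dvd_pow_self ℓ m.succ_ne_zero)).mp h))

namespace Polynomial

@[simp]
lemma natDegree_X_sub_one {R : Type*} [Ring R] [Nontrivial R] : (X - 1 : R[X]).natDegree = 1 := by
  rw [← C_1, natDegree_X_sub_C]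

lemma card_support_expand_le {R : Type*} [CommSemiring R] {q : ℕ} (hq : 0 < q) (f : R[X]) :
    (expand R q f).support.card ≤ f.support.card := by
  classical
  refine (Finset.card_le_card fun k hk => ?_).trans (f.support.card_image_le (f := (q * ·)))
  rw [mem_support_iff, coeff_expand hq] at hk
  split_ifs at hk with h
  · exact Finset.mem_image.mpr ⟨k / q, mem_support_iff.mpr hk, Nat.mul_div_cancel' h⟩
  · exact absurd rfl hk

lemma card_support_pow_expChar_pow_le {R : Type*} [CommRing R] (p : ℕ) [ExpChar R p] (f : R[X])
    (k : ℕ) : (f ^ p ^ k).support.card ≤ f.support.card := by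
  rw [← map_iterateFrobenius_expand]
  exact (Finset.card_le_card (support_map_subset _ _)).trans
    (card_support_expand_le (expChar_pow_pos R p k) f)

lemma aeval_inv_eq_zero_of_pow_card_add_one_eq_one {F K : Type*} [Field F] [Fintype F]
    [Field K] [Algebra F K] {ζ : K} (hζ : ζ ^ (Fintype.card F + 1) = 1) {P : F[X]}
    (h : aeval ζ P = 0) : aeval ζ⁻¹ P = 0 := by
  rw [← eq_inv_of_mul_eq_one_left (by rwa [← pow_succ]), ← expand_aeval,
    FiniteField.expand_card, map_pow, h, zero_pow Fintype.card_ne_zero]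

lemma pow_expChar_pow_dvd_X_pow_sub_one {R : Type*} [CommRing R] (p : ℕ) [ExpChar R p]
    {A : R[X]} {n : ℕ} (hA : A ∣ X ^ n - 1) (k : ℕ) : A ^ p ^ k ∣ X ^ (n * p ^ k) - 1 := by
  rw [pow_mul, ← one_pow (p ^ k), ← sub_pow_expChar_pow]
  exact pow_dvd_pow_of_dvd hA _

lemma hammingNorm_eq_card_support_ofFn {R : Type*} [Semiring R] [DecidableEq R] {n : ℕ}
    (c : Fin n → R) : hammingNorm c = (ofFn n c).support.card := by
  refine Finset.card_bij (fun k _ => (k : ℕ)) (fun k hk => ?_) (fun _ _ _ _ h => Fin.ext h)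
    (fun k hk => ?_)
  · simpa [mem_support_iff, k.isLt] using hk
  · have hkn : k < n := by
      by_contra h
      exact mem_support_iff.mp hk (ofFn_coeff_eq_zero_of_ge c (not_lt.mp h))
    refine ⟨⟨k, hkn⟩, ?_, rfl⟩
    simpa [mem_support_iff, hkn] using hk

lemma hammingNorm_toFn {R : Type*} [Semiring R] [DecidableEq R] {n : ℕ} {Q : R[X]}
    (hQ : Q.natDegree < n) : hammingNorm (toFn n Q) = Q.support.card := by
  rw [hammingNorm_eq_card_support_ofFn, ofFn_comp_toFn_eq_id_of_natDegree_lt hQ]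

section RootMultiplicity

variable {F : Type*} [Field F] {p : ℕ} [CharP F p]

lemma rootMultiplicity_one_binomial_le_one {δ ε : F} {K : ℕ} (hε : ε ≠ 0) (hK : ¬ p ∣ K) :
    rootMultiplicity 1 (C δ + C ε * X ^ K) ≤ 1 := by
  have hKF : (K : F) ≠ 0 := by rwa [Ne, CharP.cast_eq_zero_iff F p]
  have hder : derivative (C δ + C ε * X ^ K) = C (ε * K) * X ^ (K - 1) := by
    rw [derivative_add, derivative_C, derivative_C_mul, derivative_X_pow, zero_add, C_mul,
      C_eq_natCast, mul_assoc]
  have hεK : ε * K ≠ 0 := mul_ne_zero hε hKF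
  have hder0 : derivative (C δ + C ε * X ^ K) ≠ 0 := by
    rw [hder]; exact mul_ne_zero (C_ne_zero.mpr hεK) (pow_ne_zero _ X_ne_zero)
  have := rootMultiplicity_sub_one_le_derivative_rootMultiplicity_of_ne_zero _ 1 hder0
  rw [hder, rootMultiplicity_eq_zero (p := C (ε * K) * X ^ (K - 1)) (by simp [hεK])] at this
  omega

variable [Fact p.Prime]

lemma rootMultiplicity_one_binomial_le {δ ε : F} (hε : ε ≠ 0) (v : ℕ) {K : ℕ}
    (hK : ¬ p ^ (v + 1) ∣ K) : rootMultiplicity 1 (C δ + C ε * X ^ K) ≤ p ^ v := by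
  induction v generalizing K with
  | zero =>
    exact (rootMultiplicity_one_binomial_le_one hε (by simpa using hK)).trans_eq (pow_zero p).symm
  | succ v ih =>
    by_cases hpK : p ∣ K
    · obtain ⟨K, rfl⟩ := hpK
      have hexp : C δ + C ε * X ^ (p * K) = expand F p (C δ + C ε * X ^ K) := by
        simp [pow_mul]
      have hK' : ¬ p ^ (v + 1) ∣ K := fun h => hK (by rw [pow_succ']; exact mul_dvd_mul_left p h)
      rw [hexp, rootMultiplicity_expand, one_pow, pow_succ']
      exact Nat.mul_le_mul_left p (ih hK')
    · exact (rootMultiplicity_one_binomial_le_one hε hpK).trans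
        (Nat.one_le_pow _ _ (Fact.out : p.Prime).pos)

lemma rootMultiplicity_one_trinomial_le_of_not_dvd {a b c : F} {D E : ℕ} (hb : b ≠ 0)
    (hc : c ≠ 0) (hD : 0 < D) (hDE : D < E) (hpDE : ¬ (p ∣ D ∧ p ∣ E)) (u : ℕ)
    (hu : ¬ p ^ (u + 1) ∣ E - D) :
    rootMultiplicity 1 (C a + C b * X ^ D + C c * X ^ E) ≤ p ^ u + 1 := by
  set B : F[X] := C (b * D) + C (c * E) * X ^ (E - D)
  have hder : derivative (C a + C b * X ^ D + C c * X ^ E) = X ^ (D - 1) * B := by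
    have hE : E - 1 = D - 1 + (E - D) := by omega
    simp only [B, derivative_add, derivative_C, derivative_C_mul, derivative_X_pow, zero_add,
      C_mul, C_eq_natCast, hE, pow_add]
    ring
  have hB : rootMultiplicity 1 B ≤ p ^ u ∧ B ≠ 0 := by
    by_cases hEF : (E : F) = 0
    · have hDF : (D : F) ≠ 0 := by
        rw [CharP.cast_eq_zero_iff F p] at hEF
        rw [Ne, CharP.cast_eq_zero_iff F p]
        exact fun h => hpDE ⟨h, hEF⟩
      have hBC : B = C (b * D) := by simp [B, hEF]
      rw [hBC, rootMultiplicity_C]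
      exact ⟨Nat.zero_le _, C_ne_zero.mpr (mul_ne_zero hb hDF)⟩
    · refine ⟨rootMultiplicity_one_binomial_le (mul_ne_zero hc hEF) u hu, fun h0 => ?_⟩
      have hcoeff : B.coeff (E - D) = c * E := by
        simp only [B, coeff_add, coeff_C, coeff_C_mul_X_pow, if_pos,
          if_neg (Nat.sub_pos_of_lt hDE).ne', zero_add]
      rw [h0, coeff_zero] at hcoeff
      exact mul_ne_zero hc hEF hcoeff.symm
  have hder0 : derivative (C a + C b * X ^ D + C c * X ^ E) ≠ 0 := by
    rw [hder]; exact mul_ne_zero (pow_ne_zero _ X_ne_zero) hB.2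
  have := rootMultiplicity_sub_one_le_derivative_rootMultiplicity_of_ne_zero _ 1 hder0
  rw [hder, rootMultiplicity_mul (mul_ne_zero (pow_ne_zero _ X_ne_zero) hB.2),
    rootMultiplicity_eq_zero (p := X ^ (D - 1)) (by simp)] at this
  omega

lemma rootMultiplicity_one_trinomial_le {a b c : F} (hb : b ≠ 0) (hc : c ≠ 0) {D E : ℕ}
    (hD : 0 < D) (hDE : D < E) (u : ℕ) (hu : ¬ p ^ (u + 1) ∣ E - D) (v : ℕ)
    (hv : ¬ p ^ (v + 1) ∣ E) :
    rootMultiplicity 1 (C a + C b * X ^ D + C c * X ^ E) ≤ p ^ u + p ^ v := by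
  induction v generalizing D E u with
  | zero =>
    simpa using rootMultiplicity_one_trinomial_le_of_not_dvd (a := a) hb hc hD hDE
      (fun h => hv (by simpa using h.2)) u hu
  | succ v ih =>
    by_cases hpDE : p ∣ D ∧ p ∣ E
    · obtain ⟨⟨D, rfl⟩, ⟨E, rfl⟩⟩ := hpDE
      obtain _ | u := u
      · exact absurd (by rw [← Nat.mul_sub]; simp) hu
      have hexp : C a + C b * X ^ (p * D) + C c * X ^ (p * E) =
          expand F p (C a + C b * X ^ D + C c * X ^ E) := by
        simp [pow_mul]
      rw [hexp, rootMultiplicity_expand, one_pow, pow_succ', pow_succ', ← Nat.mul_add]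
      refine Nat.mul_le_mul_left p (ih (Nat.pos_of_mul_pos_left hD)
        (Nat.lt_of_mul_lt_mul_left hDE) u (fun h => hu ?_) (fun h => hv ?_))
      · rw [← Nat.mul_sub, pow_succ' p (u + 1)]; exact mul_dvd_mul_left p h
      · rw [pow_succ' p (v + 1)]; exact mul_dvd_mul_left p h
    · have := rootMultiplicity_one_trinomial_le_of_not_dvd (a := a) hb hc hD hDE hpDE u hu
      have := Nat.one_le_pow (v + 1) p (Fact.out : p.Prime).pos
      omega

end RootMultiplicity

section Weight

variable {F K : Type*} [Field F] [Field K] [Algebra F K] {ζ : K} {i : ℕ}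

lemma X_sub_one_pow_dvd_and_aeval_eq_zero_of_X_pow_mul (hζ0 : ζ ≠ 0) {k : ℕ} {B : F[X]}
    (hi : (X - 1) ^ i ∣ X ^ k * B) (hζB : aeval ζ (X ^ k * B) = 0) :
    (X - 1) ^ i ∣ B ∧ aeval ζ B = 0 := by
  have hcop : IsCoprime (X - C 1 : F[X]) (X - C 0) := isCoprime_X_sub_C_of_isUnit_sub (by simp)
  exact ⟨hcop.pow.dvd_of_dvd_mul_left (by simpa using hi), by simpa [hζ0] using hζB⟩

variable {p : ℕ} [Fact p.Prime] [CharP F p] {n t : ℕ}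

lemma le_of_X_sub_one_pow_dvd_binomial (hζ : IsPrimitiveRoot ζ n) (hnp : n.Coprime p)
    {x y : F} (hy : y ≠ 0) {D : ℕ} (hD : 0 < D) (hDlt : D < n * p ^ (t + 1))
    (hi : (X - 1) ^ i ∣ C x + C y * X ^ D) (hζB : aeval ζ (C x + C y * X ^ D) = 0) :
    i ≤ p ^ t := by
  obtain rfl | hi0 := Nat.eq_zero_or_pos i
  · exact Nat.zero_le _
  rw [← C_1] at hi
  have hB0 : C x + C y * X ^ D ≠ 0 := fun h0 => hy <| by
    simpa [coeff_C, hD.ne'] using congrArg (coeff · D) h0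
  have hxy : x + y = 0 := by
    simpa using dvd_iff_isRoot.mp ((dvd_pow_self _ hi0.ne').trans hi)
  have hζD : ζ ^ D = 1 := by
    have hyK : algebraMap F K y ≠ 0 := by simpa using hy
    refine sub_eq_zero.mp ((mul_eq_zero.mp ?_).resolve_left hyK)
    have := congrArg (algebraMap F K) hxy
    rw [map_add, map_zero] at this
    simp only [map_add, map_mul, map_pow, aeval_C, aeval_X] at hζB
    linear_combination hζB - this
  rw [← le_rootMultiplicity_iff hB0] at hi
  exact hi.trans (rootMultiplicity_one_binomial_le hy t
    (Nat.not_pow_succ_dvd_of_dvd_of_lt hnp hD (hζ.pow_eq_one_iff_dvd D |>.mp hζD) hDlt))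

lemma le_of_X_sub_one_pow_dvd_trinomial (hζ : IsPrimitiveRoot ζ n) (hnp : n.Coprime p)
    (hconj : ∀ P : F[X], aeval ζ P = 0 → aeval ζ⁻¹ P = 0) {x y z : F} (hx : x ≠ 0) (hy : y ≠ 0)
    (hz : z ≠ 0) {D E : ℕ} (hD : 0 < D) (hDE : D < E) (hElt : E < n * p ^ (t + 1))
    (hi : (X - 1) ^ i ∣ C x + C y * X ^ D + C z * X ^ E)
    (hζB : aeval ζ (C x + C y * X ^ D + C z * X ^ E) = 0) : i ≤ 2 * p ^ t := by
  obtain rfl | hi0 := Nat.eq_zero_or_pos i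
  · exact Nat.zero_le _
  rw [← C_1] at hi
  have hB0 : C x + C y * X ^ D + C z * X ^ E ≠ 0 := fun h0 => hz <| by
    simpa [coeff_C, hD.ne', (hD.trans hDE).ne', hDE.ne'] using congrArg (coeff · E) h0
  have hxyz : x + y + z = 0 := by
    simpa using dvd_iff_isRoot.mp ((dvd_pow_self _ hi0.ne').trans hi)
  have hζ0 : ζ ≠ 0 := hζ.ne_zero (by rintro rfl; simp at hElt)
  have hinv := hconj _ hζB
  simp only [map_add, map_mul, map_pow, aeval_C, aeval_X, inv_pow] at hζB hinv
  obtain ⟨hζD, hζE⟩ := eq_one_and_eq_one_of_conj_relations (by simpa using hx)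
    (by simpa using hy) (by simpa using hz) (pow_ne_zero D hζ0) (pow_ne_zero E hζ0)
    (by simpa using congrArg (algebraMap F K) hxyz) hζB hinv
  have hnD := hζ.pow_eq_one_iff_dvd D |>.mp hζD
  have hnE := hζ.pow_eq_one_iff_dvd E |>.mp hζE
  rw [← le_rootMultiplicity_iff hB0] at hi
  refine hi.trans ((rootMultiplicity_one_trinomial_le hy hz hD hDE t ?_ t ?_).trans_eq
    (two_mul _).symm)
  · exact Nat.not_pow_succ_dvd_of_dvd_of_lt hnp (Nat.sub_pos_of_lt hDE) (Nat.dvd_sub hnE hnD)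
      ((Nat.sub_le E D).trans_lt hElt)
  · exact Nat.not_pow_succ_dvd_of_dvd_of_lt hnp (hD.trans hDE) hnE hElt

theorem four_le_card_support_of_X_sub_one_pow_dvd (hζ : IsPrimitiveRoot ζ n) (hnp : n.Coprime p)
    (hconj : ∀ P : F[X], aeval ζ P = 0 → aeval ζ⁻¹ P = 0) (hi : 2 * p ^ t < i) {Q : F[X]}
    (hQ : Q ≠ 0) (hQdeg : Q.natDegree < n * p ^ (t + 1)) (hQi : (X - 1) ^ i ∣ Q)
    (hζQ : aeval ζ Q = 0) : 4 ≤ Q.support.card := by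
  have hζ0 : ζ ≠ 0 := hζ.ne_zero (by rintro rfl; simp at hQdeg)
  have hXpow : ∀ {a b : ℕ}, a ≤ b → (X : F[X]) ^ b = X ^ a * X ^ (b - a) := fun h => by
    rw [← pow_add, Nat.add_sub_cancel' h]
  by_contra! hcard
  interval_cases h : Q.support.card
  · exact hQ (card_support_eq_zero.mp h)
  · obtain ⟨k, x, hx, rfl⟩ := card_support_eq_one.mp h
    have : (X - C 1 : F[X]) ∣ C x * X ^ k := by
      rw [C_1]; exact (dvd_pow_self _ (by omega)).trans hQi
    rw [dvd_iff_isRoot] at this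
    simp [hx] at this
  · obtain ⟨k, m, hkm, x, y, hx, hy, rfl⟩ := card_support_eq_two.mp h
    have hm : m ≤ (C x * X ^ k + C y * X ^ m).natDegree :=
      le_natDegree_of_mem_supp m (by simp [support_binomial hkm.ne hx hy])
    rw [show C x * X ^ k + C y * X ^ m = X ^ k * (C x + C y * X ^ (m - k)) by
      rw [hXpow hkm.le]; ring] at hQi hζQ
    obtain ⟨hBi, hζB⟩ := X_sub_one_pow_dvd_and_aeval_eq_zero_of_X_pow_mul hζ0 hQi hζQ
    have := le_of_X_sub_one_pow_dvd_binomial (t := t) hζ hnp hy (Nat.sub_pos_of_lt hkm)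
      (by omega) hBi hζB
    omega
  · obtain ⟨k, m, l, hkm, hml, x, y, z, hx, hy, hz, rfl⟩ := card_support_eq_three.mp h
    have hl : l ≤ (C x * X ^ k + C y * X ^ m + C z * X ^ l).natDegree :=
      le_natDegree_of_mem_supp l (by simp [support_trinomial hkm hml hx hy hz])
    rw [show C x * X ^ k + C y * X ^ m + C z * X ^ l =
        X ^ k * (C x + C y * X ^ (m - k) + C z * X ^ (l - k)) by
      rw [hXpow hkm.le, hXpow (hkm.trans hml).le]; ring] at hQi hζQ
    obtain ⟨hBi, hζB⟩ := X_sub_one_pow_dvd_and_aeval_eq_zero_of_X_pow_mul hζ0 hQi hζQ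
    have := le_of_X_sub_one_pow_dvd_trinomial (t := t) hζ hnp hconj hx hy hz
      (Nat.sub_pos_of_lt hkm) (by omega) (by omega) hBi hζB
    omega

end Weight

end Polynomial

lemma AdjoinRoot.isPrimitiveRoot_root {K : Type*} [CommRing K] {f : K[X]} {ℓ : ℕ}
    [Fact ℓ.Prime] (hf : f ∣ X ^ ℓ - 1) (hf1 : ¬ f ∣ X - 1) : IsPrimitiveRoot (root f) ℓ := by
  refine IsPrimitiveRoot.iff_orderOf.mpr (orderOf_eq_prime ?_ fun h1 => hf1 ?_)
  · simpa [sub_eq_zero] using mk_eq_zero.mpr hf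
  · refine mk_eq_zero.mp ?_
    rw [map_sub, mk_X, map_one]
    exact sub_eq_zero.mpr h1

lemma mem_cyclicCode_iff {F : Type} [Field F] [DecidableEq F] {n : ℕ} {g : F[X]}
    (hg : g ∣ X ^ n - 1) (c : Fin n → F) : c ∈ cyclicCode F n g ↔ g ∣ ofFn n c := by
  have hsum : ∑ i : Fin n, C (c i) * X ^ (i : ℕ) = ofFn n c := by
    simp only [ofFn_eq_sum_monomial, C_mul_X_pow_eq_monomial]
  have hspan : Ideal.span {Ideal.Quotient.mk (Ideal.span {(X : F[X]) ^ n - 1}) g} =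
      (Ideal.span {g}).map (Ideal.Quotient.mk _) := by
    rw [Ideal.map_span, Set.image_singleton]
  rw [cyclicCode, Set.mem_ofPred_eq, hsum, hspan,
    Ideal.mem_quotient_iff_mem (Ideal.span_singleton_le_span_singleton.mpr hg),
    Ideal.mem_span_singleton]

lemma toFn_mem_cyclicCode {F : Type} [Field F] [DecidableEq F] {n : ℕ} {g Q : F[X]}
    (hg : g ∣ X ^ n - 1) (hQ : Q.natDegree < n) (hgQ : g ∣ Q) : toFn n Q ∈ cyclicCode F n g := by
  rwa [mem_cyclicCode_iff hg, ofFn_comp_toFn_eq_id_of_natDegree_lt hQ]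

lemma sInf_hammingNorm_cyclicCode_eq {F : Type} [Field F] [DecidableEq F] {n d : ℕ}
    {g w : F[X]} (hg : g ∣ X ^ n - 1)
    (hlow : ∀ Q : F[X], Q ≠ 0 → Q.natDegree < n → g ∣ Q → d ≤ Q.support.card)
    (hw0 : w ≠ 0) (hwdeg : w.natDegree < n) (hgw : g ∣ w) (hwd : w.support.card ≤ d) :
    sInf {k | ∃ c ∈ cyclicCode F n g, c ≠ 0 ∧ hammingNorm c = k} = d := by
  have hlow' : ∀ c ∈ cyclicCode F n g, c ≠ 0 → d ≤ hammingNorm c := by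
    intro c hc hc0
    rw [mem_cyclicCode_iff hg] at hc
    rw [hammingNorm_eq_card_support_ofFn]
    exact hlow _ ((map_ne_zero_iff _ (injective_ofFn _)).mpr hc0)
      (ofFn_natDegree_lt (by omega) c) hc
  have hmem := toFn_mem_cyclicCode hg hwdeg hgw
  have hne : toFn n w ≠ 0 := fun h => hw0 <| by
    rw [← ofFn_comp_toFn_eq_id_of_natDegree_lt hwdeg, h, map_zero]
  refine IsLeast.csInf_eq ⟨⟨_, hmem, hne, le_antisymm ?_ (hlow' _ hmem hne)⟩, ?_⟩
  · exact (hammingNorm_toFn hwdeg).trans_le hwd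
  · rintro _ ⟨c, hc, hc0, rfl⟩
    exact hlow' c hc hc0

theorem stmt_14_general (p m q s : ℕ) (hp : p.Prime) (hq : q = p ^ m)
    (hs : 1 ≤ s) (h1 : 5 ∣ q + 1)
    (F : Type) [Field F] [Fintype F] [DecidableEq F] (hF : Fintype.card F = q)
    (f₁ : F[X]) (hf₁irr : Irreducible f₁)
    (hf₁deg : f₁.natDegree = 2) (hf₁dvd : f₁ ∣ X ^ 5 - 1)
    (i j : ℕ) (hi1 : 2 * p ^ (s - 1) < i) (hi2 : i ≤ p ^ s)
    (hj1 : 0 < j) (hj2 : j ≤ p ^ s) :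
    sInf {w | ∃ c ∈ cyclicCode F (5 * p ^ s) ((X - 1) ^ i * f₁ ^ j),
        c ≠ 0 ∧ hammingNorm c = w} = 4 := by
  have := Fact.mk hp
  have : CharP F p := charP_of_card_eq_prime_pow (hF.trans hq)
  have : Fact (Nat.Prime 5) := ⟨Nat.prime_five⟩
  have := Fact.mk hf₁irr
  obtain ⟨t, rfl⟩ : ∃ t, s = t + 1 := ⟨s - 1, by omega⟩
  rw [Nat.add_sub_cancel] at hi1
  have h5p := Nat.coprime_of_dvd_pow_add_one Nat.prime_five (by norm_num) hp (hq ▸ h1)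
  have hX1 : (X - 1 : F[X]) ≠ 0 := X_sub_C_ne_zero 1
  have hf₁X : ¬ f₁ ∣ X - 1 := fun h => by simpa [hf₁deg] using natDegree_le_of_dvd h hX1
  have hζ := AdjoinRoot.isPrimitiveRoot_root hf₁dvd hf₁X
  have hζq : AdjoinRoot.root f₁ ^ (Fintype.card F + 1) = 1 := by
    rw [hζ.pow_eq_one_iff_dvd, hF]; exact h1
  have hA : (X - 1) * f₁ ∣ X ^ 5 - 1 := (hf₁irr.coprime_iff_not_dvd.mpr hf₁X).symm.mul_dvd
    (by simpa using sub_dvd_pow_sub_pow (X : F[X]) 1 5) hf₁dvd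
  have hAdeg : ((X - 1) * f₁).natDegree = 3 := by simp [natDegree_mul hX1 hf₁irr.ne_zero, hf₁deg]
  have hgA : (X - 1) ^ i * f₁ ^ j ∣ ((X - 1) * f₁) ^ p ^ (t + 1) := by
    rw [mul_pow]; exact mul_dvd_mul (pow_dvd_pow _ hi2) (pow_dvd_pow _ hj2)
  refine sInf_hammingNorm_cyclicCode_eq (hgA.trans (pow_expChar_pow_dvd_X_pow_sub_one p hA _))
    (fun Q hQ hQdeg hgQ => four_le_card_support_of_X_sub_one_pow_dvd hζ h5p
      (fun _ => aeval_inv_eq_zero_of_pow_card_add_one_eq_one hζq) hi1 hQ hQdeg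
      ((dvd_mul_right _ _).trans hgQ) ?_)
    (pow_ne_zero _ (mul_ne_zero hX1 hf₁irr.ne_zero)) ?_ hgA ?_
  · rw [AdjoinRoot.aeval_eq, AdjoinRoot.mk_eq_zero]
    exact ((dvd_pow_self f₁ hj1.ne').trans (dvd_mul_left _ _)).trans hgQ
  · rw [natDegree_pow, hAdeg]
    have := pow_pos hp.pos (t + 1)
    omega
  · exact (card_support_pow_expChar_pow_le p _ _).trans
      ((card_supp_le_succ_natDegree _).trans_eq (by rw [hAdeg]))

theorem stmt_14 (p m q s : ℕ) (hp : p.Prime) (hp7 : 7 ≤ p) (hm : 0 < m) (hq : q = p ^ m)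
    (hs : 1 ≤ s) (h1 : 5 ∣ q + 1) (h2 : ¬ (5 ∣ q - 1))
    (F : Type) [Field F] [Fintype F] [DecidableEq F] (hF : Fintype.card F = q)
    (f₁ : F[X]) (hf₁irr : Irreducible f₁) (hf₁mon : f₁.Monic)
    (hf₁deg : f₁.natDegree = 2) (hf₁dvd : f₁ ∣ X ^ 5 - 1)
    (i j : ℕ) (hi1 : 2 * p ^ (s - 1) < i) (hi2 : i ≤ p ^ s)
    (hj1 : 0 < j) (hj2 : j ≤ p ^ s) :
    sInf {w | ∃ c ∈ cyclicCode F (5 * p ^ s) ((X - 1) ^ i * f₁ ^ j),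
        c ≠ 0 ∧ hammingNorm c = w} = 4 :=
  stmt_14_general p m q s hp hq hs h1 F hF f₁ hf₁irr hf₁deg hf₁dvd i j hi1 hi2 hj1 hj2
end

section
/- Let p ≥ 7 be a prime, q = p^m with 5 | (q-1), s ≥ 1, ω ∈ F_q a primitive 5th root of unity, and let C = ⟨(x-1)^{i_0}(x-ω)^{i_1}(x-ω^2)^{i_2}(x-ω^3)^{i_3}(x-ω^4)^{i_4}⟩ be a cyclic code of length 5p^s over F_q with 0 ≤ i_4 ≤ i_3 ≤ i_2 ≤ i_1 ≤ i_0 ≤ p^s. Then C is an MDS code if and only if either (i_0,i_1,i_2,i_3,i_4) = (0,0,0,0,0), or (1,0,0,0,0), or (p^s,p^s,p^s,p^s,p^s-1). -/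
open Polynomial

set_option linter.unusedSectionVars false
set_option linter.unusedVariables false
set_option maxHeartbeats 2000000

namespace Stmt16Aux

variable {F : Type} [Field F] [DecidableEq F]

lemma coeff_polyvec {n : ℕ} (c : Fin n → F) (j : ℕ) :
    (∑ i : Fin n, C (c i) * X ^ (i : ℕ)).coeff j
      = if hj : j < n then c ⟨j, hj⟩ else 0 := by
  rw [finset_sum_coeff]
  split_ifs with hj
  · rw [Finset.sum_eq_single (⟨j, hj⟩ : Fin n)]
    · simp
    · intro b _ hb
      rw [coeff_C_mul, coeff_X_pow, if_neg, mul_zero]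
      exact fun h => hb (Fin.ext h.symm)
    · simp
  · apply Finset.sum_eq_zero
    intro b _
    rw [coeff_C_mul, coeff_X_pow, if_neg, mul_zero]
    exact fun h => hj (h ▸ b.isLt)

lemma polyvec_natDegree_lt {n : ℕ} (hn : 0 < n) (c : Fin n → F) :
    (∑ i : Fin n, C (c i) * X ^ (i : ℕ)).natDegree < n := by
  have : (∑ i : Fin n, C (c i) * X ^ (i : ℕ)).natDegree ≤ n - 1 := by
    apply natDegree_sum_le_of_forall_le
    intro i _
    apply (natDegree_C_mul_le _ _).trans
    simp only [natDegree_X_pow]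
    omega
  omega

lemma polyvec_eq_zero {n : ℕ} (c : Fin n → F)
    (h : (∑ i : Fin n, C (c i) * X ^ (i : ℕ)) = 0) : c = 0 := by
  funext j
  have := congrArg (fun q => Polynomial.coeff q (j : ℕ)) h
  simp only [coeff_polyvec, coeff_zero] at this
  rw [dif_pos j.isLt] at this
  simpa using this

lemma polyvec_of_poly {n : ℕ} (h : F[X]) (hd : h.natDegree < n) :
    (∑ i : Fin n, C (h.coeff (i : ℕ)) * X ^ (i : ℕ)) = h := by
  ext j
  rw [coeff_polyvec]
  split_ifs with hj
  · rfl
  · exact (coeff_eq_zero_of_natDegree_lt (lt_of_lt_of_le hd (not_lt.1 hj))).symm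

lemma hammingNorm_coeffvec {n : ℕ} (h : F[X]) (hd : h.natDegree < n) :
    hammingNorm (fun i : Fin n => h.coeff (i : ℕ)) = h.support.card := by
  classical
  unfold hammingNorm
  refine Finset.card_bij (fun i _ => (i : ℕ)) ?_ ?_ ?_
  · intro a ha
    simp only [Finset.mem_filter] at ha
    exact mem_support_iff.2 ha.2
  · intro a _ b _ hab
    exact Fin.ext hab
  · intro b hb
    have hb' := mem_support_iff.1 hb
    have hbn : b < n := lt_of_le_of_lt (le_natDegree_of_ne_zero hb') hd
    exact ⟨⟨b, hbn⟩, by simp [hb'], rfl⟩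

lemma weight_mem {n : ℕ} (g h h' : F[X]) (heq : h = g * h')
    (h0 : h ≠ 0) (hd : h.natDegree < n) :
    h.support.card ∈ {w | ∃ c ∈ cyclicCode F n g, c ≠ 0 ∧ hammingNorm c = w} := by
  refine ⟨fun i : Fin n => h.coeff (i : ℕ), ?_, ?_, hammingNorm_coeffvec h hd⟩
  · show _ ∈ Ideal.span _
    rw [polyvec_of_poly h hd, heq, map_mul]
    exact Ideal.mem_span_singleton'.2 ⟨_, mul_comm _ _⟩
  · intro hc
    apply h0
    ext j
    by_cases hj : j < n
    · have := congrFun hc ⟨j, hj⟩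
      simpa using this
    · simp [coeff_eq_zero_of_natDegree_lt (lt_of_lt_of_le hd (not_lt.1 hj))]

lemma sInf_le_weight {n : ℕ} (g h h' : F[X]) (heq : h = g * h')
    (h0 : h ≠ 0) (hd : h.natDegree < n) :
    sInf {w | ∃ c ∈ cyclicCode F n g, c ≠ 0 ∧ hammingNorm c = w} ≤ h.support.card :=
  Nat.sInf_le (weight_mem g h h' heq h0 hd)

lemma mem_code_exists {n : ℕ} (g : F[X]) (c : Fin n → F) (hc : c ∈ cyclicCode F n g) :
    ∃ h k : F[X],
      (∑ i : Fin n, C (c i) * X ^ (i : ℕ)) = g * h + ((X : F[X]) ^ n - 1) * k := by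
  obtain ⟨a, ha⟩ := Ideal.mem_span_singleton'.1 hc
  obtain ⟨h, rfl⟩ := Ideal.Quotient.mk_surjective a
  rw [← map_mul, Ideal.Quotient.mk_eq_mk_iff_sub_mem] at ha
  obtain ⟨k, hk⟩ := Ideal.mem_span_singleton'.1 ha
  refine ⟨h, -k, ?_⟩
  linear_combination hk

lemma card_support_expand_le (t : ℕ) (ht : 0 < t) (f : F[X]) :
    ((expand F t) f).support.card ≤ f.support.card := by
  have hsub : ((expand F t) f).support ⊆ f.support.image (· * t) := by
    intro j hj
    have hj' := mem_support_iff.1 hj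
    rw [coeff_expand ht] at hj'
    split_ifs at hj' with hd
    · exact Finset.mem_image.2 ⟨j / t, mem_support_iff.2 hj', (Nat.div_mul_cancel hd)⟩
    · exact absurd rfl hj'
  exact (Finset.card_le_card hsub).trans Finset.card_image_le

lemma ndeg_binpow (a : F) (e : ℕ) : (((X : F[X]) - C a) ^ e).natDegree ≤ e :=
  natDegree_pow_le.trans (by simp [natDegree_X_sub_C])

lemma card_support_binpow (a : F) (e : ℕ) :
    (((X : F[X]) - C a) ^ e).support.card ≤ e + 1 :=
  (card_supp_le_succ_natDegree _).trans (by have := ndeg_binpow a e; omega)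

section Char

variable (p : ℕ) [Fact p.Prime] [CharP F p]

lemma binpow_expand (k : ℕ) (a : F) :
    ((X : F[X]) - C a) ^ p ^ k = expand F (p ^ k) (X - C (a ^ p ^ k)) := by
  rw [map_sub, expand_X, expand_C, C_pow]
  exact sub_pow_char_pow ..

lemma W2 (a : F) (k mm : ℕ) :
    (((X : F[X]) - C a) ^ (p ^ k * mm)).support.card ≤ mm + 1 := by
  rw [pow_mul, binpow_expand, ← map_pow]
  exact (card_support_expand_le _ (pow_pos (Fact.out (p := p.Prime)).pos k) _).trans
    (card_support_binpow _ _)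

lemma W5 (k t : ℕ) :
    ((((X : F[X]) ^ 5 - 1)) ^ (p ^ k * t)).support.card ≤ t + 1 := by
  have h1 : (((X : F[X]) ^ 5 - 1)) ^ (p ^ k * t)
      = expand F (5 * p ^ k) ((X - C 1) ^ t) := by
    rw [map_pow, map_sub, expand_X, expand_C, pow_mul]
    congr 1
    rw [sub_pow_char_pow, ← pow_mul, C_1, one_pow, mul_comm 5 (p ^ k)]
  rw [h1]
  exact (card_support_expand_le _ (Nat.mul_pos (by norm_num) (pow_pos (Fact.out (p := p.Prime)).pos k)) _).trans (card_support_binpow _ _)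

lemma W4 (a b c d : F) (k : ℕ) :
    ((((X : F[X]) - C a) * (X - C b) * (X - C c) * (X - C d)) ^ p ^ k).support.card ≤ 5 := by
  have h1 : (((X : F[X]) - C a) * (X - C b) * (X - C c) * (X - C d)) ^ p ^ k
      = expand F (p ^ k) ((X - C (a ^ p ^ k)) * (X - C (b ^ p ^ k)) *
          (X - C (c ^ p ^ k)) * (X - C (d ^ p ^ k))) := by
    rw [mul_pow, mul_pow, mul_pow, binpow_expand, binpow_expand, binpow_expand, binpow_expand,
      ← map_mul, ← map_mul, ← map_mul]
  rw [h1]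
  refine (card_support_expand_le _ (pow_pos (Fact.out (p := p.Prime)).pos k) _).trans
    ((card_supp_le_succ_natDegree _).trans ?_)
  have h2 : ((X - C (a ^ p ^ k)) * (X - C (b ^ p ^ k)) * (X - C (c ^ p ^ k)) *
      ((X : F[X]) - C (d ^ p ^ k))).natDegree ≤ 4 := by
    apply natDegree_mul_le.trans
    have := natDegree_mul_le (p := ((X : F[X]) - C (a ^ p ^ k)) * (X - C (b ^ p ^ k)))
      (q := ((X : F[X]) - C (c ^ p ^ k)))
    have := natDegree_mul_le (p := ((X : F[X]) - C (a ^ p ^ k)))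
      (q := ((X : F[X]) - C (b ^ p ^ k)))
    simp only [natDegree_X_sub_C] at *
    omega
  omega

lemma W3 (a b c : F) (k : ℕ) :
    ((((X : F[X]) - C a) * (X - C b) * (X - C c)) ^ p ^ k).support.card ≤ 4 := by
  have h1 : (((X : F[X]) - C a) * (X - C b) * (X - C c)) ^ p ^ k
      = expand F (p ^ k) ((X - C (a ^ p ^ k)) * (X - C (b ^ p ^ k)) * (X - C (c ^ p ^ k))) := by
    rw [mul_pow, mul_pow, binpow_expand, binpow_expand, binpow_expand, ← map_mul, ← map_mul]
  rw [h1]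
  refine (card_support_expand_le _ (pow_pos (Fact.out (p := p.Prime)).pos k) _).trans
    ((card_supp_le_succ_natDegree _).trans ?_)
  have h2 : ((X - C (a ^ p ^ k)) * (X - C (b ^ p ^ k)) *
      ((X : F[X]) - C (c ^ p ^ k))).natDegree ≤ 3 := by
    apply natDegree_mul_le.trans
    have := natDegree_mul_le (p := ((X : F[X]) - C (a ^ p ^ k)))
      (q := ((X : F[X]) - C (b ^ p ^ k)))
    simp only [natDegree_X_sub_C] at *
    omega
  omega

lemma Wpair (a b : F) (k : ℕ) :
    ((((X : F[X]) - C a) * (X - C b)) ^ p ^ k).support.card ≤ 3 := by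
  have h1 : (((X : F[X]) - C a) * (X - C b)) ^ p ^ k
      = expand F (p ^ k) ((X - C (a ^ p ^ k)) * (X - C (b ^ p ^ k))) := by
    rw [mul_pow, binpow_expand, binpow_expand, ← map_mul]
  rw [h1]
  refine (card_support_expand_le _ (pow_pos (Fact.out (p := p.Prime)).pos k) _).trans
    ((card_supp_le_succ_natDegree _).trans ?_)
  have h2 : (((X : F[X]) - C (a ^ p ^ k)) * (X - C (b ^ p ^ k))).natDegree ≤ 2 := by
    apply natDegree_mul_le.trans
    rw [natDegree_X_sub_C, natDegree_X_sub_C]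
  omega

end Char

section More
variable {F : Type} [Field F]

lemma quintic_factor {ω : F} (hω : IsPrimitiveRoot ω 5) :
    (X - 1) * (X - C ω) * (X - C (ω ^ 2)) * (X - C (ω ^ 3)) * (X - C (ω ^ 4))
      = (X : F[X]) ^ 5 - 1 := by
  have hsum : (1 : F) + ω + ω ^ 2 + ω ^ 3 + ω ^ 4 = 0 := by
    have h := hω.geom_sum_eq_zero (by norm_num)
    rw [Finset.sum_range_succ, Finset.sum_range_succ, Finset.sum_range_succ,
      Finset.sum_range_succ, Finset.sum_range_one] at h
    linear_combination h
  have hs : (1 : F[X]) + C ω + (C ω) ^ 2 + (C ω) ^ 3 + (C ω) ^ 4 = 0 := by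
    have := congrArg (C : F → F[X]) hsum
    simpa using this
  have hw5 : ((C ω : F[X])) ^ 5 = 1 := by
    have h5 : ω ^ 5 = 1 := hω.pow_eq_one
    have := congrArg (C : F → F[X]) h5
    simpa using this
  have h2 : C (ω ^ 2) = (C ω : F[X]) ^ 2 := by rw [map_pow]
  have h3 : C (ω ^ 3) = (C ω : F[X]) ^ 3 := by rw [map_pow]
  have h4 : C (ω ^ 4) = (C ω : F[X]) ^ 4 := by rw [map_pow]
  rw [h2, h3, h4]
  linear_combination (-(X : F[X]) ^ 4 + 2 * X ^ 3 - 2 * X ^ 2 + (C ω) ^ 5 * X) * hs +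
    ((2 + C ω + (C ω) ^ 2) * X ^ 3 -
      (2 + 2 * C ω + 2 * (C ω) ^ 2 + (C ω) ^ 3 + (C ω) ^ 4) * X ^ 2 +
      (C ω) ^ 5 * X - ((C ω) ^ 5 + 1)) * hw5

end More

variable {F : Type} [Field F] [DecidableEq F]

lemma pow_split (f : F[X]) (x y : ℕ) (h : y ≤ x) : f ^ x = f ^ y * f ^ (x - y) := by
  rw [← pow_add, Nat.add_sub_cancel' h]

lemma five_eq (A B Cc D E : F[X]) {a b c d e a' b' c' d' e' : ℕ} (ha : a = a') (hb : b = b')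
    (hc : c = c') (hd : d = d') (he : e = e') :
    A ^ a * B ^ b * Cc ^ c * D ^ d * E ^ e = A ^ a' * B ^ b' * Cc ^ c' * D ^ d' * E ^ e' := by
  subst ha hb hc hd he; rfl

lemma five_split (A B Cc D E : F[X]) {a b c d e a' b' c' d' e' : ℕ} (ha : a' ≤ a) (hb : b' ≤ b)
    (hc : c' ≤ c) (hd : d' ≤ d) (he : e' ≤ e) :
    A ^ a * B ^ b * Cc ^ c * D ^ d * E ^ e
      = (A ^ a' * B ^ b' * Cc ^ c' * D ^ d' * E ^ e') *
        (A ^ (a - a') * B ^ (b - b') * Cc ^ (c - c') * D ^ (d - d') * E ^ (e - e')) := by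
  rw [pow_split A a a' ha, pow_split B b b' hb, pow_split Cc c c' hc, pow_split D d d' hd,
    pow_split E e e' he]
  ring

lemma five_ne (A B Cc D E : F[X]) (hA : A ≠ 0) (hB : B ≠ 0) (hC : Cc ≠ 0) (hD : D ≠ 0)
    (hE : E ≠ 0) (a b c d e : ℕ) : A ^ a * B ^ b * Cc ^ c * D ^ d * E ^ e ≠ 0 :=
  mul_ne_zero (mul_ne_zero (mul_ne_zero (mul_ne_zero (pow_ne_zero _ hA) (pow_ne_zero _ hB))
    (pow_ne_zero _ hC)) (pow_ne_zero _ hD)) (pow_ne_zero _ hE)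

lemma ndeg_prod5 (A B Cc D E : F[X]) (hA : A.natDegree ≤ 1) (hB : B.natDegree ≤ 1)
    (hC : Cc.natDegree ≤ 1) (hD : D.natDegree ≤ 1) (hE : E.natDegree ≤ 1) (a b c d e : ℕ) :
    (A ^ a * B ^ b * Cc ^ c * D ^ d * E ^ e).natDegree ≤ a + b + c + d + e := by
  have h1 : (A ^ a).natDegree ≤ a := natDegree_pow_le.trans (by nlinarith)
  have h2 : (B ^ b).natDegree ≤ b := natDegree_pow_le.trans (by nlinarith)
  have h3 : (Cc ^ c).natDegree ≤ c := natDegree_pow_le.trans (by nlinarith)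
  have h4 : (D ^ d).natDegree ≤ d := natDegree_pow_le.trans (by nlinarith)
  have h5 : (E ^ e).natDegree ≤ e := natDegree_pow_le.trans (by nlinarith)
  calc (A ^ a * B ^ b * Cc ^ c * D ^ d * E ^ e).natDegree
      ≤ (A ^ a * B ^ b * Cc ^ c * D ^ d).natDegree + (E ^ e).natDegree := natDegree_mul_le
    _ ≤ ((A ^ a * B ^ b * Cc ^ c).natDegree + (D ^ d).natDegree) + (E ^ e).natDegree := by
        have := natDegree_mul_le (p := A ^ a * B ^ b * Cc ^ c) (q := D ^ d); omega
    _ ≤ (((A ^ a * B ^ b).natDegree + (Cc ^ c).natDegree) + (D ^ d).natDegree)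
          + (E ^ e).natDegree := by
        have := natDegree_mul_le (p := A ^ a * B ^ b) (q := Cc ^ c); omega
    _ ≤ ((((A ^ a).natDegree + (B ^ b).natDegree) + (Cc ^ c).natDegree) + (D ^ d).natDegree)
          + (E ^ e).natDegree := by
        have := natDegree_mul_le (p := A ^ a) (q := B ^ b); omega
    _ ≤ a + b + c + d + e := by omega

lemma card_mul3 (f g h : F[X]) :
    (f * g * h).support.card ≤ f.support.card * g.support.card * h.support.card :=
  card_support_mul_le.trans (Nat.mul_le_mul_right _ card_support_mul_le)

section Main
variable {F : Type} [Field F] [DecidableEq F]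

variable {F : Type} [Field F] [DecidableEq F]

lemma nonMDS_ub (p s : ℕ) [Fact p.Prime] [CharP F p] (hp7 : 7 ≤ p) (hs : 1 ≤ s)
    (ω : F) (hω : IsPrimitiveRoot ω 5)
    (i₀ i₁ i₂ i₃ i₄ : ℕ) (h43 : i₄ ≤ i₃) (h32 : i₃ ≤ i₂) (h21 : i₂ ≤ i₁)
    (h10 : i₁ ≤ i₀) (h0 : i₀ ≤ p ^ s)
    (hnot : ¬ ((i₀ = 0 ∧ i₁ = 0 ∧ i₂ = 0 ∧ i₃ = 0 ∧ i₄ = 0) ∨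
      (i₀ = 1 ∧ i₁ = 0 ∧ i₂ = 0 ∧ i₃ = 0 ∧ i₄ = 0) ∨
      (i₀ = p ^ s ∧ i₁ = p ^ s ∧ i₂ = p ^ s ∧ i₃ = p ^ s ∧ i₄ = p ^ s - 1))) :
    sInf {w | ∃ c ∈ cyclicCode F (5 * p ^ s)
          ((X - 1) ^ i₀ * (X - C ω) ^ i₁ * (X - C (ω ^ 2)) ^ i₂ *
            (X - C (ω ^ 3)) ^ i₃ * (X - C (ω ^ 4)) ^ i₄),
        c ≠ 0 ∧ hammingNorm c = w} ≤ i₀ + i₁ + i₂ + i₃ + i₄ := by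
  have hppos : 0 < p := by omega
  have hPpos : 0 < p ^ s := pow_pos hppos s
  have hP7 : 7 ≤ p ^ s := le_trans hp7 (Nat.le_self_pow (by omega) p)
  have hK1 : (X - 1) * (X - C ω) * (X - C (ω ^ 2)) * (X - C (ω ^ 3)) * (X - C (ω ^ 4))
      = (X : F[X]) ^ 5 - 1 := quintic_factor hω
  set A : F[X] := X - 1 with hA
  set B : F[X] := X - C ω with hB
  set Cc : F[X] := X - C (ω ^ 2) with hCc
  set D : F[X] := X - C (ω ^ 3) with hD
  set E : F[X] := X - C (ω ^ 4) with hE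
  set g : F[X] := A ^ i₀ * B ^ i₁ * Cc ^ i₂ * D ^ i₃ * E ^ i₄ with hgdef
  clear_value g
  clear_value A B Cc D E
  have hA1 : A = X - C 1 := by rw [hA, C_1]
  have hAd : A.natDegree ≤ 1 := by rw [hA1]; exact le_of_eq (natDegree_X_sub_C 1)
  have hBd : B.natDegree ≤ 1 := by rw [hB]; exact le_of_eq (natDegree_X_sub_C ω)
  have hCd : Cc.natDegree ≤ 1 := by rw [hCc]; exact le_of_eq (natDegree_X_sub_C (ω ^ 2))
  have hDd : D.natDegree ≤ 1 := by rw [hD]; exact le_of_eq (natDegree_X_sub_C (ω ^ 3))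
  have hEd : E.natDegree ≤ 1 := by rw [hE]; exact le_of_eq (natDegree_X_sub_C (ω ^ 4))
  have hAn : A ≠ 0 := by rw [hA1]; exact X_sub_C_ne_zero 1
  have hBn : B ≠ 0 := by rw [hB]; exact X_sub_C_ne_zero ω
  have hCn : Cc ≠ 0 := by rw [hCc]; exact X_sub_C_ne_zero (ω ^ 2)
  have hDn : D ≠ 0 := by rw [hD]; exact X_sub_C_ne_zero (ω ^ 3)
  have hEn : E ≠ 0 := by rw [hE]; exact X_sub_C_ne_zero (ω ^ 4)
  -- generic closing move
  have main : ∀ (e₀ e₁ e₂ e₃ e₄ : ℕ) (hsp : F[X]),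
      hsp = A ^ e₀ * B ^ e₁ * Cc ^ e₂ * D ^ e₃ * E ^ e₄ →
      i₀ ≤ e₀ → i₁ ≤ e₁ → i₂ ≤ e₂ → i₃ ≤ e₃ → i₄ ≤ e₄ →
      e₀ + e₁ + e₂ + e₃ + e₄ < 5 * p ^ s →
      hsp.support.card ≤ i₀ + i₁ + i₂ + i₃ + i₄ →
      sInf {w | ∃ c ∈ cyclicCode F (5 * p ^ s) g, c ≠ 0 ∧ hammingNorm c = w}
        ≤ i₀ + i₁ + i₂ + i₃ + i₄ := by
    intro e₀ e₁ e₂ e₃ e₄ hsp hspe he0 he1 he2 he3 he4 hdeg hw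
    refine le_trans (sInf_le_weight g hsp (A^(e₀-i₀)*B^(e₁-i₁)*Cc^(e₂-i₂)*D^(e₃-i₃)*E^(e₄-i₄)) ?_ ?_ ?_) hw
    · rw [hspe, hgdef]
      exact five_split A B Cc D E he0 he1 he2 he3 he4
    · rw [hspe]; exact five_ne A B Cc D E hAn hBn hCn hDn hEn _ _ _ _ _
    · rw [hspe]
      exact lt_of_le_of_lt (ndeg_prod5 A B Cc D E hAd hBd hCd hDd hEd _ _ _ _ _) hdeg

  -- all-pˢ case: zero code
  by_cases hall : i₀ = p ^ s ∧ i₁ = p ^ s ∧ i₂ = p ^ s ∧ i₃ = p ^ s ∧ i₄ = p ^ s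
  · obtain ⟨e0, e1, e2, e3, e4⟩ := hall
    have hgX : g = (X : F[X]) ^ (5 * p ^ s) - 1 := by
      have h1 : g = (A * B * Cc * D * E) ^ p ^ s := by
        rw [hgdef, e0, e1, e2, e3, e4]; ring
      rw [h1, hK1, sub_pow_char_pow, ← pow_mul, one_pow]
    have hempty : {w | ∃ c ∈ cyclicCode F (5 * p ^ s) g, c ≠ 0 ∧ hammingNorm c = w} = ∅ := by
      ext w
      simp only [Set.mem_setOf_eq, Set.mem_empty_iff_false, iff_false, not_exists]
      rintro c ⟨hc, hc0, -⟩
      obtain ⟨h, k, hrep⟩ := mem_code_exists g c hc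
      apply hc0
      apply polyvec_eq_zero
      by_contra hf0
      have hdvd : ((X : F[X]) ^ (5 * p ^ s) - 1)
          ∣ (∑ i : Fin (5 * p ^ s), C (c i) * X ^ (i : ℕ)) := by
        rw [hrep, hgX]
        exact ⟨h + k, by ring⟩
      have h1 := natDegree_le_of_dvd hdvd hf0
      have h2 : ((X : F[X]) ^ (5 * p ^ s) - 1).natDegree = 5 * p ^ s := by
        rw [← C_1]; exact natDegree_X_pow_sub_C
      have h3 := polyvec_natDegree_lt (F := F) (n := 5 * p ^ s) (by omega) c
      omega
    rw [hempty, Nat.sInf_empty]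
    exact Nat.zero_le _
  -- the N5 construction, used twice
  have n5 : i₃ + 1 ≤ p ^ s → i₄ + 1 ≤ p ^ s → 4 * p ^ s ≤ i₀ + i₁ + i₂ + i₃ + i₄ →
      sInf {w | ∃ c ∈ cyclicCode F (5 * p ^ s) g, c ≠ 0 ∧ hammingNorm c = w}
        ≤ i₀ + i₁ + i₂ + i₃ + i₄ := by
    intro hn3 hn4 hnw
    refine main (p ^ s) (p ^ s) (p ^ s) (p ^ s - 1) (p ^ s - 1)
      (((X : F[X]) ^ 5 - 1) ^ (p ^ s - 1) * (A * B * Cc)) ?_ (by omega) (by omega) (by omega)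
      (by omega) (by omega) (by omega) ?_
    · calc ((X : F[X]) ^ 5 - 1) ^ (p ^ s - 1) * (A * B * Cc)
          = A ^ ((p ^ s - 1) + 1) * B ^ ((p ^ s - 1) + 1) * Cc ^ ((p ^ s - 1) + 1) *
            D ^ (p ^ s - 1) * E ^ (p ^ s - 1) := by rw [← hK1]; ring
        _ = _ := five_eq A B Cc D E (by omega) (by omega) (by omega) rfl rfl
    · have hw1 := W5 (F := F) p 0 (p ^ s - 1)
      rw [pow_zero, one_mul] at hw1
      have hw2 := W3 (F := F) p 1 ω (ω ^ 2) 0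
      rw [pow_zero, pow_one] at hw2
      calc ((((X : F[X]) ^ 5 - 1)) ^ (p ^ s - 1) * (A * B * Cc)).support.card
          ≤ _ := card_support_mul_le
        _ ≤ (p ^ s - 1 + 1) * 4 := by
            refine Nat.mul_le_mul hw1 ?_
            rw [hA1, hB, hCc]; exact hw2
        _ ≤ i₀ + i₁ + i₂ + i₃ + i₄ := by omega
  by_cases h1z : i₁ = 0
  · -- weight-2 codeword (X-1)^(pˢ)
    have e2 : i₂ = 0 := by omega
    have e3 : i₃ = 0 := by omega
    have e4 : i₄ = 0 := by omega
    have hi02 : 2 ≤ i₀ := by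
      by_contra hlt
      have : i₀ = 0 ∨ i₀ = 1 := by omega
      rcases this with h' | h'
      · exact hnot (Or.inl ⟨h', h1z, e2, e3, e4⟩)
      · exact hnot (Or.inr (Or.inl ⟨h', h1z, e2, e3, e4⟩))
    refine main (p ^ s) 0 0 0 0 (A ^ p ^ s) (by ring) h0 (by omega) (by omega) (by omega)
      (by omega) (by omega) ?_
    have hw2 := W2 (F := F) p (1 : F) s 1
    rw [mul_one] at hw2
    have : (A ^ p ^ s).support.card ≤ 2 := by rw [hA1]; exact hw2
    omega
  by_cases hi0lt : i₀ < p ^ s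
  · -- codeword (X⁵-1)^(i₀)
    refine main i₀ i₀ i₀ i₀ i₀ (((X : F[X]) ^ 5 - 1) ^ i₀) (by rw [← hK1]; ring) le_rfl h10
      (by omega) (by omega) (by omega) (by omega) ?_
    have hw := W5 (F := F) p 0 i₀
    rw [pow_zero, one_mul] at hw
    omega
  have he0 : i₀ = p ^ s := by omega
  by_cases h4z : i₄ = 0
  · by_cases h2z : i₂ = 0
    · have e3 : i₃ = 0 := by omega
      refine main (p ^ s) (p ^ s) 0 0 0 ((A * B) ^ p ^ s) (by ring) (by omega) (by omega)
        (by omega) (by omega) (by omega) (by omega) ?_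
      have hw := Wpair (F := F) p 1 ω s
      have : ((A * B) ^ p ^ s).support.card ≤ 3 := by rw [hA1, hB]; exact hw
      omega
    · by_cases h3z : i₃ = 0
      · refine main (p ^ s) (p ^ s) (p ^ s) 0 0 ((A * B * Cc) ^ p ^ s) (by ring) (by omega)
          (by omega) (by omega) (by omega) (by omega) (by omega) ?_
        have hw := W3 (F := F) p 1 ω (ω ^ 2) s
        have : ((A * B * Cc) ^ p ^ s).support.card ≤ 4 := by rw [hA1, hB, hCc]; exact hw
        omega
      · refine main (p ^ s) (p ^ s) (p ^ s) (p ^ s) 0 ((A * B * Cc * D) ^ p ^ s) (by ring)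
          (by omega) (by omega) (by omega) (by omega) (by omega) (by omega) ?_
        have hw := W4 (F := F) p 1 ω (ω ^ 2) (ω ^ 3) s
        have : ((A * B * Cc * D) ^ p ^ s).support.card ≤ 5 := by
          rw [hA1, hB, hCc, hD]; exact hw
        omega
  -- now i₄ ≥ 1
  have hi4lt : i₄ + 1 ≤ p ^ s := by
    by_contra hlt
    exact hall ⟨he0, by omega, by omega, by omega, by omega⟩
  by_cases hN4 : 5 * i₄ + 5 ≤ p ^ s + (i₁ + i₂ + i₃ + i₄)
  · -- quad^(pˢ) · E^(i₄)
    refine main (p ^ s) (p ^ s) (p ^ s) (p ^ s) i₄ ((A * B * Cc * D) ^ p ^ s * E ^ i₄)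
      (by ring) (by omega) (by omega) (by omega) (by omega) le_rfl (by omega) ?_
    have hw := W4 (F := F) p 1 ω (ω ^ 2) (ω ^ 3) s
    calc ((A * B * Cc * D) ^ p ^ s * E ^ i₄).support.card
        ≤ _ := card_support_mul_le
      _ ≤ 5 * (i₄ + 1) := by
          refine Nat.mul_le_mul ?_ ?_
          · rw [hA1, hB, hCc, hD]; exact hw
          · rw [hE]; exact card_support_binpow _ _
      _ ≤ i₀ + i₁ + i₂ + i₃ + i₄ := by omega
  have hc44 : p ^ s ≤ i₄ + 4 := by omega
  by_cases hc42 : i₄ + 2 ≤ p ^ s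
  · by_cases hs2 : 2 ≤ s
    · -- the k = 1 construction
      obtain ⟨x', hx'⟩ : ∃ y, p ^ (s - 1) = y + 1 := ⟨p ^ (s - 1) - 1, by
        have := pow_pos hppos (s - 1); omega⟩
      have hps : p ^ s = p * p ^ (s - 1) := by
        rw [← pow_succ']
        congr 1
        omega
      set PX := p * x' with hPX
      have hEp : PX + p = p ^ s := by rw [hps, hx', hPX]; ring
      refine main (p ^ s) (p ^ s) (p ^ s) (p ^ s) i₄
        (((X : F[X]) ^ 5 - 1) ^ PX * (A * B * Cc * D) ^ p * E ^ (p - (p ^ s - i₄)))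
        ?_ (by omega) (by omega) (by omega) (by omega) le_rfl (by omega) ?_
      · calc ((X : F[X]) ^ 5 - 1) ^ PX * (A * B * Cc * D) ^ p * E ^ (p - (p ^ s - i₄))
            = A ^ (PX + p) * B ^ (PX + p) * Cc ^ (PX + p) * D ^ (PX + p) *
              E ^ (PX + (p - (p ^ s - i₄))) := by rw [← hK1]; ring
          _ = _ := five_eq A B Cc D E (by omega) (by omega) (by omega) (by omega) (by omega)
      · -- weight admissible
        obtain ⟨p', hpp'⟩ : ∃ t, p = t + 1 := ⟨p - 1, by omega⟩
        have hQ7 : 7 ≤ p ^ (s - 1) := le_trans hp7 (Nat.le_self_pow (by omega) p)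
        have hw5 := W5 (F := F) p 1 x'
        rw [pow_one] at hw5
        have hw4 := W4 (F := F) p 1 ω (ω ^ 2) (ω ^ 3) 1
        rw [pow_one] at hw4
        have hcard : ((((X : F[X]) ^ 5 - 1)) ^ PX * (A * B * Cc * D) ^ p *
            E ^ (p - (p ^ s - i₄))).support.card
            ≤ (x' + 1) * 5 * (p - (p ^ s - i₄) + 1) := by
          calc ((((X : F[X]) ^ 5 - 1)) ^ PX * (A * B * Cc * D) ^ p *
              E ^ (p - (p ^ s - i₄))).support.card
              ≤ _ := card_mul3 _ _ _
            _ ≤ (x' + 1) * 5 * (p - (p ^ s - i₄) + 1) := by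
                refine Nat.mul_le_mul (Nat.mul_le_mul ?_ ?_) ?_
                · rw [hPX]; exact hw5
                · rw [hA1, hB, hCc, hD]; exact hw4
                · rw [hE]; exact card_support_binpow _ _
        have hle1 : p - (p ^ s - i₄) + 1 ≤ p' := by omega
        have hle2 : (x' + 1) * 5 * (p - (p ^ s - i₄) + 1) ≤ (x' + 1) * 5 * p' :=
          Nat.mul_le_mul_left _ hle1
        have hkey : (x' + 1) * 5 * p' + 5 * (x' + 1) = 5 * p ^ s := by
          have hppx : p * (x' + 1) = p ^ s := by rw [hps, hx']
          calc (x' + 1) * 5 * p' + 5 * (x' + 1) = 5 * (p' + 1) * (x' + 1) := by ring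
            _ = 5 * (p * (x' + 1)) := by rw [← hpp']; ring
            _ = 5 * p ^ s := by rw [hppx]
        have hx7 : 7 ≤ x' + 1 := by omega
        omega
    · -- s = 1
      have hseq : s = 1 := by omega
      subst hseq
      simp only [pow_one] at *
      by_cases hN5 : 4 * p ≤ i₀ + i₁ + i₂ + i₃ + i₄
      · refine n5 ?_ (by omega) hN5
        omega
      · -- the (X-1)^(pˢ)·(X⁵-1)^(i₁) construction
        have hpP : p.Prime := Fact.out
        have hp8 : p ≠ 8 := by intro h; rw [h] at hpP; exact absurd hpP (by decide)
        have hp9 : p ≠ 9 := by intro h; rw [h] at hpP; exact absurd hpP (by decide)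
        have hp10 : p ≠ 10 := by intro h; rw [h] at hpP; exact absurd hpP (by decide)
        have hp711 : p = 7 ∨ 11 ≤ p := by omega
        have harith : i₁ + 2 ≤ p ∧ p + 5 * i₁ < 5 * p := by
          rcases hp711 with h | h <;> omega
        refine main (p + i₁) i₁ i₁ i₁ i₁ (A ^ p * ((X : F[X]) ^ 5 - 1) ^ i₁)
          (by rw [← hK1]; ring) (by omega) le_rfl (by omega) (by omega) (by omega)
          (by omega) ?_
        have hw2 := W2 (F := F) p (1 : F) 1 1
        rw [mul_one, pow_one] at hw2
        have hw5 := W5 (F := F) p 0 i₁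
        rw [pow_zero, one_mul] at hw5
        calc (A ^ p * ((X : F[X]) ^ 5 - 1) ^ i₁).support.card
            ≤ _ := card_support_mul_le
          _ ≤ 2 * (i₁ + 1) := by
              refine Nat.mul_le_mul ?_ hw5
              rw [hA1]; exact hw2
          _ ≤ i₀ + i₁ + i₂ + i₃ + i₄ := by omega
  · -- i₄ = pˢ - 1
    have hi3 : i₃ + 1 ≤ p ^ s := by
      by_contra hlt
      exact hnot (Or.inr (Or.inr ⟨he0, by omega, by omega, by omega, by omega⟩))
    refine n5 hi3 (by omega) (by omega)


variable {F : Type} [Field F] [DecidableEq F]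

lemma mds0 (n : ℕ) (hn : 0 < n) :
    sInf {w | ∃ c ∈ cyclicCode F n (1 : F[X]), c ≠ 0 ∧ hammingNorm c = w} = 1 := by
  have h1 : (1 : F[X]).support.card = 1 := by
    rw [← C_1, support_C (one_ne_zero (α := F))]
    rfl
  have hmem := weight_mem (F := F) (n := n) 1 1 1 (by ring) one_ne_zero
    (by rw [natDegree_one]; omega)
  rw [h1] at hmem
  have hne : {w | ∃ c ∈ cyclicCode F n (1 : F[X]), c ≠ 0 ∧ hammingNorm c = w}.Nonempty :=
    ⟨1, hmem⟩
  obtain ⟨c, -, hc0, hcw⟩ := Nat.sInf_mem hne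
  have hle := Nat.sInf_le hmem
  have hne0 : hammingNorm c ≠ 0 := hammingNorm_ne_zero_iff.2 hc0
  omega

lemma mds1 (n : ℕ) (hn : 2 ≤ n) :
    sInf {w | ∃ c ∈ cyclicCode F n ((X : F[X]) - 1), c ≠ 0 ∧ hammingNorm c = w} = 2 := by
  have hXne : ((X : F[X]) - 1) ≠ 0 := by rw [← C_1]; exact X_sub_C_ne_zero 1
  have hsup : ((X : F[X]) - 1).support.card = 2 := by
    have hform : (X : F[X]) - 1 = C 1 * X ^ 1 + C (-1) * X ^ 0 := by
      rw [C_1, map_neg, C_1]; ring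
    rw [hform]
    exact card_support_binomial one_ne_zero one_ne_zero (neg_ne_zero.2 one_ne_zero)
  have hdeg : ((X : F[X]) - 1).natDegree < n := by
    rw [← C_1, natDegree_X_sub_C]; omega
  have hmem := weight_mem (F := F) (n := n) (X - 1) (X - 1) 1 (by ring) hXne hdeg
  rw [hsup] at hmem
  obtain ⟨c, hc, hc0, hcw⟩ := Nat.sInf_mem ⟨2, hmem⟩
  have hle := Nat.sInf_le hmem
  -- sum of coordinates of a codeword vanishes
  have hsum : ∑ i : Fin n, c i = 0 := by
    obtain ⟨h, k, hrep⟩ := mem_code_exists _ c hc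
    have := congrArg (Polynomial.eval 1) hrep
    simp only [eval_finset_sum, eval_mul, eval_add, eval_sub, eval_pow, eval_X, eval_C,
      eval_one, one_pow, mul_one, sub_self, zero_mul, mul_zero, add_zero, zero_add] at this
    exact this
  have h2 : 2 ≤ hammingNorm c := by
    rcases Nat.lt_or_ge (hammingNorm c) 2 with hlt | hge
    · exfalso
      have hne0 : hammingNorm c ≠ 0 := hammingNorm_ne_zero_iff.2 hc0
      have h1 : hammingNorm c = 1 := by omega
      unfold hammingNorm at h1
      obtain ⟨a, ha⟩ := Finset.card_eq_one.1 h1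
      have hsplit := Finset.sum_filter_add_sum_filter_not Finset.univ
        (fun i => c i ≠ 0) c
      have hz : ∑ i ∈ Finset.univ.filter (fun i => ¬ c i ≠ 0), c i = 0 :=
        Finset.sum_eq_zero (fun i hi => by
          simp only [Finset.mem_filter, not_not] at hi; exact hi.2)
      rw [ha, Finset.sum_singleton, hz, add_zero] at hsplit
      have haa : a ∈ ({a} : Finset (Fin n)) := Finset.mem_singleton_self a
      rw [← ha] at haa
      simp only [Finset.mem_filter] at haa
      exact haa.2 (by rw [← hsplit] at hsum; exact hsum)
    · exact hge
  omega


lemma mdsTop (p s : ℕ) [Fact p.Prime] [CharP F p] (hp7 : 7 ≤ p) (hs : 1 ≤ s)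
    (ω : F) (hω : IsPrimitiveRoot ω 5) :
    sInf {w | ∃ c ∈ cyclicCode F (5 * p ^ s)
        ((X - 1) ^ (p ^ s) * (X - C ω) ^ (p ^ s) * (X - C (ω ^ 2)) ^ (p ^ s) *
          (X - C (ω ^ 3)) ^ (p ^ s) * (X - C (ω ^ 4)) ^ (p ^ s - 1)),
      c ≠ 0 ∧ hammingNorm c = w} = 5 * p ^ s := by
  have hppos : 0 < p := (Fact.out (p := p.Prime)).pos
  have hPpos : 0 < p ^ s := pow_pos hppos s
  have hK1 : (X - 1) * (X - C ω) * (X - C (ω ^ 2)) * (X - C (ω ^ 3)) * (X - C (ω ^ 4))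
      = (X : F[X]) ^ 5 - 1 := quintic_factor hω
  have hω5 : ω ^ 5 = 1 := hω.pow_eq_one
  have hωne : ω ≠ 0 := by
    intro h
    rw [h, zero_pow (by norm_num)] at hω5
    exact zero_ne_one hω5
  set n := 5 * p ^ s with hn
  have hnpos : 0 < n := by positivity
  set b := ω ^ 4 with hbdef
  have hbne : b ≠ 0 := pow_ne_zero _ hωne
  have hbn : b ^ n = 1 := by
    rw [hbdef, ← pow_mul, show 4 * n = 5 * (4 * p ^ s) by rw [hn]; ring, pow_mul, hω5, one_pow]
  set vv : Fin n → F := fun i => b ^ (n - 1 - (i : ℕ)) with hvv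
  set G : F[X] := ∑ i : Fin n, C (vv i) * X ^ (i : ℕ) with hGdef
  have hGform : G = ∑ i ∈ Finset.range n, (X : F[X]) ^ i * (C b) ^ (n - 1 - i) := by
    rw [hGdef, Finset.sum_range (fun i => (X : F[X]) ^ i * (C b) ^ (n - 1 - i))]
    exact Finset.sum_congr rfl (fun i _ => by rw [hvv, ← C_pow]; ring)
  have hGmul : G * (X - C b) = X ^ n - 1 := by
    rw [hGform, geom_sum₂_mul, ← C_pow, hbn, C_1]
  set g : F[X] := (X - 1) ^ (p ^ s) * (X - C ω) ^ (p ^ s) * (X - C (ω ^ 2)) ^ (p ^ s) *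
      (X - C (ω ^ 3)) ^ (p ^ s) * (X - C (ω ^ 4)) ^ (p ^ s - 1) with hgdef
  have hgmul : g * (X - C b) = X ^ n - 1 := by
    have hps : p ^ s - 1 + 1 = p ^ s := by omega
    have h2 : ((X : F[X]) - C (ω ^ 4)) ^ (p ^ s - 1) * (X - C (ω ^ 4))
        = (X - C (ω ^ 4)) ^ (p ^ s) := by rw [← pow_succ, hps]
    have h1 : g * (X - C b)
        = ((X - 1) * (X - C ω) * (X - C (ω ^ 2)) * (X - C (ω ^ 3)) * (X - C (ω ^ 4))) ^ p ^ s := by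
      rw [mul_pow, mul_pow, mul_pow, mul_pow, hgdef, hbdef, ← h2]
      ring
    rw [h1, hK1, sub_pow_char_pow, ← pow_mul, one_pow, hn]
  have hGg : G = g := by
    apply mul_right_cancel₀ (X_sub_C_ne_zero b)
    rw [hGmul, hgmul]
  have hvne : ∀ i : Fin n, vv i ≠ 0 := fun i => pow_ne_zero _ hbne
  have hnormG : hammingNorm vv = n := by
    unfold hammingNorm
    rw [Finset.filter_true_of_mem (fun i _ => hvne i), Finset.card_univ, Fintype.card_fin]
  -- n is attained
  have hmemn : (n : ℕ) ∈ {w | ∃ c ∈ cyclicCode F n g, c ≠ 0 ∧ hammingNorm c = w} := by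
    refine ⟨vv, ?_, ?_, hnormG⟩
    · show _ ∈ Ideal.span _
      rw [← hGdef, hGg]
      exact Ideal.subset_span (Set.mem_singleton _)
    · intro h0
      have := congrFun h0 ⟨0, hnpos⟩
      exact hvne ⟨0, hnpos⟩ this
  -- every nonzero codeword has weight n
  have hall : ∀ w, w ∈ {w | ∃ c ∈ cyclicCode F n g, c ≠ 0 ∧ hammingNorm c = w} → w = n := by
    rintro w ⟨c, hc, hc0, rfl⟩
    obtain ⟨h, k, hrep⟩ := mem_code_exists g c hc
    obtain ⟨h₁, hh₁⟩ := (X_sub_C_dvd_sub_C_eval (a := b) (p := h))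
    have hD : (∑ i : Fin n, C (c i) * X ^ (i : ℕ)) - C (h.eval b) * G
        = ((X : F[X]) ^ n - 1) * (h₁ + k) := by
      linear_combination hrep + g * hh₁ + h₁ * hgmul - C (h.eval b) * hGg
    have hzero : (∑ i : Fin n, C (c i) * X ^ (i : ℕ)) - C (h.eval b) * G = 0 := by
      by_contra hne0
      have hdvd : ((X : F[X]) ^ n - 1)
          ∣ ((∑ i : Fin n, C (c i) * X ^ (i : ℕ)) - C (h.eval b) * G) := ⟨h₁ + k, hD⟩
      have h1 := natDegree_le_of_dvd hdvd hne0
      have h2 : ((X : F[X]) ^ n - 1).natDegree = n := by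
        rw [← C_1]; exact natDegree_X_pow_sub_C
      have h3 := polyvec_natDegree_lt (F := F) hnpos c
      have h4 : (C (h.eval b) * G).natDegree < n := by
        refine lt_of_le_of_lt (natDegree_C_mul_le _ _) ?_
        rw [hGdef]
        exact polyvec_natDegree_lt hnpos vv
      have h5 := natDegree_sub_le (∑ i : Fin n, C (c i) * X ^ (i : ℕ)) (C (h.eval b) * G)
      omega
    have hf : (∑ i : Fin n, C (c i) * X ^ (i : ℕ)) = C (h.eval b) * G :=
      sub_eq_zero.1 hzero
    have hlam : h.eval b ≠ 0 := by
      intro h0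
      rw [h0, C_0, zero_mul] at hf
      exact hc0 (polyvec_eq_zero c hf)
    have hci : ∀ i : Fin n, c i = h.eval b * vv i := by
      intro i
      have h6 := congrArg (fun q => Polynomial.coeff q (i : ℕ)) hf
      simp only [coeff_C_mul] at h6
      rw [coeff_polyvec, dif_pos i.isLt] at h6
      rw [hGdef, coeff_polyvec, dif_pos i.isLt] at h6
      simpa using h6
    unfold hammingNorm
    rw [Finset.filter_true_of_mem (fun i _ => by
      rw [hci i]; exact mul_ne_zero hlam (hvne i)), Finset.card_univ, Fintype.card_fin]
  have hset : {w | ∃ c ∈ cyclicCode F n g, c ≠ 0 ∧ hammingNorm c = w} = {n} := by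
    ext w
    exact ⟨fun hw => hall w hw, fun hw => by rw [Set.mem_singleton_iff] at hw; rw [hw]; exact hmemn⟩
  rw [hset]
  exact csInf_singleton n

end Main
end Stmt16Aux

open Stmt16Aux

/-- An [n,k,d] code is MDS iff d = n - k + 1; here the dimension is
`5pˢ - (i₀+i₁+i₂+i₃+i₄)`, so MDS means `d = i₀+i₁+i₂+i₃+i₄ + 1`. -/
theorem stmt_16 (p m q s : ℕ) (hp : p.Prime) (hp7 : 7 ≤ p) (hm : 0 < m) (hq : q = p ^ m)
    (hs : 1 ≤ s) (h5 : 5 ∣ q - 1)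
    (F : Type) [Field F] [Fintype F] [DecidableEq F] (hF : Fintype.card F = q)
    (ω : F) (hω : IsPrimitiveRoot ω 5)
    (i₀ i₁ i₂ i₃ i₄ : ℕ) (h43 : i₄ ≤ i₃) (h32 : i₃ ≤ i₂) (h21 : i₂ ≤ i₁)
    (h10 : i₁ ≤ i₀) (h0 : i₀ ≤ p ^ s) :
    sInf {w | ∃ c ∈ cyclicCode F (5 * p ^ s)
          ((X - 1) ^ i₀ * (X - C ω) ^ i₁ * (X - C (ω ^ 2)) ^ i₂ *
            (X - C (ω ^ 3)) ^ i₃ * (X - C (ω ^ 4)) ^ i₄),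
        c ≠ 0 ∧ hammingNorm c = w} = i₀ + i₁ + i₂ + i₃ + i₄ + 1 ↔
      (i₀ = 0 ∧ i₁ = 0 ∧ i₂ = 0 ∧ i₃ = 0 ∧ i₄ = 0) ∨
      (i₀ = 1 ∧ i₁ = 0 ∧ i₂ = 0 ∧ i₃ = 0 ∧ i₄ = 0) ∨
      (i₀ = p ^ s ∧ i₁ = p ^ s ∧ i₂ = p ^ s ∧ i₃ = p ^ s ∧ i₄ = p ^ s - 1) := by

  haveI : Fact p.Prime := ⟨hp⟩
  -- the characteristic of F is p
  haveI hcharF : CharP F p := by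
    obtain ⟨n', hprime, hcardeq⟩ := FiniteField.card F (ringChar F)
    have hdvd : ringChar F ∣ p ^ m := by
      rw [← hq, ← hF, hcardeq]
      exact dvd_pow_self _ (by positivity)
    have heq : ringChar F = p :=
      (Nat.prime_dvd_prime_iff_eq hprime hp).1 (hprime.dvd_of_dvd_pow hdvd)
    exact heq ▸ ringChar.charP F
  have hPpos : 0 < p ^ s := pow_pos (by omega) s
  have hP7 : 7 ≤ p ^ s := le_trans hp7 (Nat.le_self_pow (by omega) p)
  constructor
  · intro hL
    by_contra hR
    have := nonMDS_ub p s hp7 hs ω hω i₀ i₁ i₂ i₃ i₄ h43 h32 h21 h10 h0 hR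
    rw [hL] at this
    omega
  · rintro (⟨e0, e1, e2, e3, e4⟩ | ⟨e0, e1, e2, e3, e4⟩ | ⟨e0, e1, e2, e3, e4⟩)
    · subst e0 e1 e2 e3 e4
      simp only [pow_zero, mul_one, one_mul]
      rw [mds0 (5 * p ^ s) (by omega)]
    · subst e0 e1 e2 e3 e4
      simp only [pow_zero, pow_one, mul_one]
      rw [mds1 (5 * p ^ s) (by omega)]
    · subst e0 e1 e2 e3 e4
      rw [mdsTop p s hp7 hs ω hω]
      omega
end

section
/- Let p ≥ 7 be a prime, q = p^m with 5 ∤ (q^2-1), s ≥ 1, and let C = ⟨(x-1)^{i_1} φ_5(x)^{i_2}⟩ be a cyclic code of length 5p^s over F_q with 0 ≤ i_1, i_2 ≤ p^s. Then the dual code C^⊥ equals ⟨(x-1)^{p^s - i_1} φ_5(x)^{p^s - i_2}⟩, and C^⊥ ⊆ C if and only if 0 ≤ i_1, i_2 ≤ (p^s - 1)/2. -/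
open Polynomial

/-- The (Euclidean) dual of a code, as a set of vectors. -/
def dualCode {F : Type} [Field F] {n : ℕ} (S : Set (Fin n → F)) : Set (Fin n → F) :=
  {x | ∀ y ∈ S, ∑ i, x i * y i = 0}

/-!
Let `g = (X - 1) ^ i₁ * Φ₅ ^ i₂` and `h = (X - 1) ^ (p ^ s - i₁) * Φ₅ ^ (p ^ s - i₂)`. By Frobenius,
`g * h = (X ^ 5 - 1) ^ p ^ s = X ^ n - 1`, and `g` is self-reciprocal up to the sign `(-1) ^ i₁`,
since `X - 1` and `Φ₅` are. The dot product `x ⬝ y` is the coefficient of `X ^ (n - 1)` in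
`x(X) * X ^ (n - 1) * y(1/X)`. For `x = h a` and `y = g b` this product is `± (X ^ n - 1)` times a
polynomial of degree `< n - 1`, so `⟨h⟩ ⊆ ⟨g⟩ᗮ`. Conversely, orthogonality to the shifts `X ^ j * g`
kills the coefficients of `x * g` in degrees `deg g, …, n - 1`, and this together with `g ∣ x * g`
forces `X ^ n - 1 ∣ x * g`, i.e. `h ∣ x`.

Containment of cyclic codes is divisibility of the generators. As `X - 1` and `Φ₅` are coprime
(`Φ₅(1) = 5 ≠ 0` because `p ≠ 5`), `g ∣ h` exactly when `2 i₁ ≤ p ^ s` and `2 i₂ ≤ p ^ s`,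
and `p ^ s` is odd.
-/

theorem Ideal.Quotient.mk_dvd_mk_iff_of_dvd {R : Type*} [CommRing R] {a g f : R} (hg : g ∣ a) :
    Ideal.Quotient.mk (Ideal.span {a}) g ∣ Ideal.Quotient.mk (Ideal.span {a}) f ↔ g ∣ f := by
  refine ⟨fun ⟨r, hr⟩ => ?_, map_dvd _⟩
  obtain ⟨r, rfl⟩ := Ideal.Quotient.mk_surjective r
  rw [← map_mul, Ideal.Quotient.eq, Ideal.mem_span_singleton] at hr
  exact (dvd_sub_left (dvd_mul_right g r)).mp (hg.trans hr)

theorem pow_mul_pow_dvd_pow_mul_pow_iff {R : Type*} [CommRing R] [IsDomain R] {x y : R}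
    (hxy : IsCoprime x y) (hx : ¬IsUnit x) (hy : ¬IsUnit y) {a b c d : ℕ} :
    x ^ a * y ^ b ∣ x ^ c * y ^ d ↔ a ≤ c ∧ b ≤ d := by
  have hx0 : x ≠ 0 := by rintro rfl; exact hy (isCoprime_zero_left.mp hxy)
  have hy0 : y ≠ 0 := by rintro rfl; exact hx (isCoprime_zero_right.mp hxy)
  refine ⟨fun h => ⟨?_, ?_⟩, fun ⟨hac, hbd⟩ => mul_dvd_mul (pow_dvd_pow x hac) (pow_dvd_pow y hbd)⟩
  · exact (pow_dvd_pow_iff hx0 hx).mp (hxy.pow.dvd_of_dvd_mul_right ((dvd_mul_right _ _).trans h))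
  · exact (pow_dvd_pow_iff hy0 hy).mp
      (hxy.symm.pow.dvd_of_dvd_mul_left ((dvd_mul_left _ _).trans h))

namespace Polynomial

section Reverse

variable {R : Type*} [CommRing R] [IsDomain R]

theorem reverse_pow (f : R[X]) (n : ℕ) : (f ^ n).reverse = f.reverse ^ n := by
  induction n with
  | zero => simpa using reverse_C (1 : R)
  | succ n ih => rw [pow_succ, reverse_mul_of_domain, ih, pow_succ]

theorem reverse_X_pow_sub_one (n : ℕ) : ((X : R[X]) ^ n - 1).reverse = -(X ^ n - 1) := by
  rcases Nat.eq_zero_or_pos n with rfl | hn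
  · simp
  have hdeg : ((X : R[X]) ^ n - 1).natDegree = n := by
    simpa using natDegree_X_pow_sub_C (n := n) (r := (1 : R))
  rw [reverse, hdeg, reflect_sub, reflect_monomial, reflect_one, revAt_le le_rfl, Nat.sub_self,
    pow_zero, neg_sub]

theorem reverse_X_sub_one : ((X : R[X]) - 1).reverse = -(X - 1) := by
  simpa using reverse_X_pow_sub_one (R := R) 1

theorem reverse_cyclotomic_prime (ℓ : ℕ) [Fact ℓ.Prime] :
    (cyclotomic ℓ R).reverse = cyclotomic ℓ R := by
  have h := congrArg reverse (cyclotomic_prime_mul_X_sub_one R ℓ)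
  rw [reverse_mul_of_domain, reverse_X_sub_one, reverse_X_pow_sub_one,
    ← cyclotomic_prime_mul_X_sub_one R ℓ] at h
  exact mul_right_cancel₀ (X_sub_C_ne_zero 1) (by simpa [C_1] using (by linear_combination -h :
    (cyclotomic ℓ R).reverse * (X - 1) = cyclotomic ℓ R * (X - 1)))

theorem reverse_X_sub_one_pow_mul_cyclotomic_pow (ℓ : ℕ) [Fact ℓ.Prime] (a b : ℕ) :
    ((X - 1) ^ a * cyclotomic ℓ R ^ b).reverse =
      C ((-1) ^ a) * ((X - 1) ^ a * cyclotomic ℓ R ^ b) := by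
  rw [reverse_mul_of_domain, reverse_pow, reverse_pow, reverse_X_sub_one, reverse_cyclotomic_prime,
    neg_pow, map_pow, map_neg, map_one]
  ring

end Reverse

theorem isCoprime_X_sub_one_cyclotomic_prime {K : Type*} [Field K] (ℓ : ℕ) [Fact ℓ.Prime]
    (hℓ : (ℓ : K) ≠ 0) : IsCoprime (X - 1 : K[X]) (cyclotomic ℓ K) := by
  rw [← C_1, (prime_X_sub_C 1).coprime_iff_not_dvd, dvd_iff_isRoot, IsRoot.def,
    eval_one_cyclotomic_prime]
  exact hℓ

theorem reflect_mul_of_reverse_eq {R : Type*} [Semiring R] {g b : R[X]} {u : R}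
    (hrev : g.reverse = C u * g) {N : ℕ} (hb : b.natDegree ≤ N) :
    reflect (g.natDegree + N) (g * b) = C u * g * reflect N b := by
  rw [reflect_mul g b le_rfl hb, ← reverse, hrev]

theorem ne_zero_of_reverse_eq_C_mul {R : Type*} [Semiring R] {g : R[X]} {u : R} (hg : g ≠ 0)
    (hrev : g.reverse = C u * g) : u ≠ 0 := by
  rintro rfl
  simp [hg] at hrev

section Pairing

variable {K : Type*} [Field K] {n : ℕ}

theorem coeff_X_pow_sub_one_mul_eq_zero {Q : K[X]} (hQ : ((X ^ n - 1) * Q).natDegree < 2 * n - 1) :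
    ((X ^ n - 1) * Q).coeff (n - 1) = 0 := by
  rcases eq_or_ne Q 0 with rfl | hQ0
  · simp
  rcases Nat.eq_zero_or_pos n with rfl | hn
  · simp
  have hXn : ((X : K[X]) ^ n - 1).natDegree = n := by
    simpa using natDegree_X_pow_sub_C (n := n) (r := (1 : K))
  rw [natDegree_mul (ne_zero_of_natDegree_gt (hXn ▸ hn)) hQ0, hXn] at hQ
  rw [sub_mul, coeff_sub, coeff_X_pow_mul', if_neg (by omega), one_mul,
    coeff_eq_zero_of_natDegree_lt (by omega), sub_zero]

/-- Write `P = A + X ^ n * B` with `A` and `B` of degree `< deg g`: then `A + B ≡ P` modulo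
`X ^ n - 1` is a multiple of `g` of smaller degree, so it vanishes. -/
theorem X_pow_sub_one_dvd_of_coeff_eq_zero (hn : 0 < n) {g P : K[X]} (hg : g ∣ X ^ n - 1)
    (hgP : g ∣ P) (hdeg : P.natDegree < n + g.natDegree)
    (hcoeff : ∀ k, g.natDegree ≤ k → k < n → P.coeff k = 0) : X ^ n - 1 ∣ P := by
  have hg0 : g ≠ 0 := by
    rintro rfl
    exact X_pow_sub_C_ne_zero hn (1 : K) (by simpa using zero_dvd_iff.mp hg)
  set d := g.natDegree
  set A := P %ₘ X ^ n
  set B := P /ₘ X ^ n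
  have hP : A + X ^ n * B = P := modByMonic_add_div P (X ^ n)
  have hA : ∀ k, d ≤ k → A.coeff k = 0 := by
    intro k hk
    rcases lt_or_ge k n with hkn | hkn
    · rw [← hcoeff k hk hkn, ← hP, coeff_add, coeff_X_pow_mul', if_neg (by omega), add_zero]
    · have hAn : A.degree < n := by
        simpa using degree_modByMonic_lt P (monic_X_pow (R := K) n)
      exact coeff_eq_zero_of_degree_lt (hAn.trans_le (WithBot.coe_le_coe.mpr hkn))
  have hB : ∀ k, d ≤ k → B.coeff k = 0 := by
    intro k hk
    calc B.coeff k = (X ^ n * B).coeff (k + n) := (coeff_X_pow_mul B n k).symm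
      _ = (A + X ^ n * B).coeff (k + n) := by rw [coeff_add, hA (k + n) (by omega), zero_add]
      _ = 0 := by rw [hP]; exact coeff_eq_zero_of_natDegree_lt (by omega)
  have hAB : A + B = 0 := by
    refine eq_zero_of_dvd_of_degree_lt (p := g) ?_ ?_
    · rw [show A + B = P - (X ^ n - 1) * B by linear_combination hP]
      exact dvd_sub hgP (hg.mul_right B)
    · rw [degree_eq_natDegree hg0, degree_lt_iff_coeff_zero]
      intro k hk
      rw [coeff_add, hA k (by exact_mod_cast hk), hB k (by exact_mod_cast hk), add_zero]
  exact ⟨B, by linear_combination hAB - hP⟩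

variable [DecidableEq K]

theorem sum_C_mul_X_pow_eq_ofFn (c : Fin n → K) :
    ∑ i : Fin n, C (c i) * X ^ (i : ℕ) = ofFn n c := by
  simp [ofFn_eq_sum_monomial, C_mul_X_pow_eq_monomial]

theorem sum_mul_eq_coeff_ofFn_mul_reflect (x y : Fin n → K) :
    ∑ i, x i * y i = (ofFn n x * reflect (n - 1) (ofFn n y)).coeff (n - 1) := by
  rcases Nat.eq_zero_or_pos n with rfl | hn
  · simp
  rw [coeff_mul, Finset.Nat.sum_antidiagonal_eq_sum_range_succ_mk, Nat.succ_eq_add_one,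
    Nat.sub_add_cancel hn, ← Fin.sum_univ_eq_sum_range]
  refine Finset.sum_congr rfl fun i _ => ?_
  rw [coeff_reflect, revAt_le (by omega), Nat.sub_sub_self (by omega),
    ofFn_coeff_eq_val_of_lt _ i.isLt, ofFn_coeff_eq_val_of_lt _ i.isLt]

end Pairing

end Polynomial

section CyclicCode

variable {F : Type} [Field F] {n : ℕ}

theorem cyclicCode_eq_preimage [DecidableEq F] (g : F[X]) :
    cyclicCode F n g =
      (fun c => Ideal.Quotient.mk (Ideal.span {(X : F[X]) ^ n - 1}) (ofFn n c)) ⁻¹'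
        Ideal.span {Ideal.Quotient.mk (Ideal.span {(X : F[X]) ^ n - 1}) g} := by
  ext c
  simp [cyclicCode, sum_C_mul_X_pow_eq_ofFn]

theorem mem_cyclicCode_iff_dvd [DecidableEq F] {g : F[X]} (hg : g ∣ X ^ n - 1) {c : Fin n → F} :
    c ∈ cyclicCode F n g ↔ g ∣ ofFn n c := by
  rw [cyclicCode_eq_preimage, Set.mem_preimage, SetLike.mem_coe, Ideal.mem_span_singleton,
    Ideal.Quotient.mk_dvd_mk_iff_of_dvd hg]

theorem surjective_mk_ofFn [DecidableEq F] (hn : 0 < n) :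
    Function.Surjective fun c : Fin n → F =>
      Ideal.Quotient.mk (Ideal.span {(X : F[X]) ^ n - 1}) (ofFn n c) := by
  intro f
  obtain ⟨f, rfl⟩ := Ideal.Quotient.mk_surjective f
  have hmonic : ((X : F[X]) ^ n - 1).Monic := by simpa using monic_X_pow_sub_C (1 : F) hn.ne'
  have hdeg : ((X : F[X]) ^ n - 1).natDegree = n := by
    simpa using natDegree_X_pow_sub_C (n := n) (r := (1 : F))
  have hrem : (f %ₘ (X ^ n - 1)).natDegree < n :=
    (natDegree_modByMonic_lt f hmonic fun h1 => by simp [h1] at hdeg; omega).trans_eq hdeg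
  refine ⟨toFn n (f %ₘ (X ^ n - 1)), ?_⟩
  dsimp only
  rw [ofFn_comp_toFn_eq_id_of_natDegree_lt hrem, Ideal.Quotient.eq, Ideal.mem_span_singleton,
    modByMonic_eq_sub_mul_div]
  exact ⟨-(f /ₘ (X ^ n - 1)), by ring⟩

theorem cyclicCode_subset_cyclicCode_iff (hn : 0 < n) {g h : F[X]} (hg : g ∣ X ^ n - 1) :
    cyclicCode F n h ⊆ cyclicCode F n g ↔ g ∣ h := by
  classical
  rw [cyclicCode_eq_preimage, cyclicCode_eq_preimage,
    (surjective_mk_ofFn hn).preimage_subset_preimage_iff, SetLike.coe_subset_coe,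
    Ideal.span_singleton_le_span_singleton, Ideal.Quotient.mk_dvd_mk_iff_of_dvd hg]

variable {g h : F[X]} {u : F}

theorem cyclicCode_subset_dualCode (hgh : g * h = X ^ n - 1) (hrev : g.reverse = C u * g) :
    cyclicCode F n h ⊆ dualCode (cyclicCode F n g) := by
  classical
  rcases Nat.eq_zero_or_pos n with rfl | hn
  · intro x _ y _
    simp
  intro x hx y hy
  obtain ⟨a, ha⟩ := (mem_cyclicCode_iff_dvd ⟨g, by rw [← hgh, mul_comm]⟩).mp hx
  obtain ⟨b, hb⟩ := (mem_cyclicCode_iff_dvd ⟨h, hgh.symm⟩).mp hy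
  rw [sum_mul_eq_coeff_ofFn_mul_reflect]
  rcases eq_or_ne (g * b) 0 with hgb | hgb
  · simp [hb, hgb]
  have hu := ne_zero_of_reverse_eq_C_mul (left_ne_zero_of_mul hgb) hrev
  have hdb : g.natDegree + b.natDegree < n := by
    rw [← natDegree_mul (left_ne_zero_of_mul hgb) (right_ne_zero_of_mul hgb), ← hb]
    exact ofFn_natDegree_lt hn y
  set N := n - 1 - g.natDegree
  have hN : n - 1 = g.natDegree + N := by omega
  have hprod : ofFn n x * reflect (n - 1) (ofFn n y) = C u * ((X ^ n - 1) * (a * reflect N b)) := by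
    rw [ha, hb, hN, reflect_mul_of_reverse_eq hrev (by omega), ← hgh]
    ring
  have hdeg : (ofFn n x * reflect (n - 1) (ofFn n y)).natDegree < 2 * n - 1 := by
    refine natDegree_mul_le.trans_lt ?_
    have hx := ofFn_natDegree_lt hn x
    have hy := (natDegree_reflect_le (N := n - 1) (p := ofFn n y)).trans
      (max_le le_rfl (Nat.le_sub_one_of_lt (ofFn_natDegree_lt hn y)))
    omega
  rw [hprod, natDegree_C_mul hu] at hdeg
  rw [hprod, coeff_C_mul, coeff_X_pow_sub_one_mul_eq_zero hdeg, mul_zero]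

/-- Pairing `x` with the codeword `g * X ^ (k - deg g)` picks out this coefficient. -/
theorem coeff_mul_ofFn_eq_zero_of_mem_dualCode [DecidableEq F] (hg : g ∣ X ^ n - 1)
    (hrev : g.reverse = C u * g) (hu : u ≠ 0) {x : Fin n → F}
    (hx : x ∈ dualCode (cyclicCode F n g)) {k : ℕ} (hdk : g.natDegree ≤ k) (hkn : k < n) :
    (g * ofFn n x).coeff k = 0 := by
  obtain ⟨j, rfl⟩ := Nat.exists_eq_add_of_le hdk
  obtain ⟨m, hm⟩ := Nat.exists_eq_add_of_lt hkn
  have hdeg : (g * X ^ j).natDegree < n :=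
    (natDegree_mul_le.trans (by rw [natDegree_X_pow])).trans_lt hkn
  have hy : toFn n (g * X ^ j) ∈ cyclicCode F n g := by
    rw [mem_cyclicCode_iff_dvd hg, ofFn_comp_toFn_eq_id_of_natDegree_lt hdeg]
    exact dvd_mul_right _ _
  have hxy := hx _ hy
  rw [sum_mul_eq_coeff_ofFn_mul_reflect, ofFn_comp_toFn_eq_id_of_natDegree_lt hdeg,
    show n - 1 = g.natDegree + (j + m) by omega,
    reflect_mul_of_reverse_eq hrev (natDegree_X_pow_le j |>.trans (by omega)),
    reflect_monomial, revAt_le (by omega), show j + m - j = m by omega,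
    show ofFn n x * (C u * g * X ^ m) = C u * (g * ofFn n x) * X ^ m by ring,
    ← add_assoc, coeff_mul_X_pow, coeff_C_mul] at hxy
  exact (mul_eq_zero.mp hxy).resolve_left hu

theorem dualCode_cyclicCode (hn : 0 < n) (hgh : g * h = X ^ n - 1) (hrev : g.reverse = C u * g) :
    dualCode (cyclicCode F n g) = cyclicCode F n h := by
  classical
  have hg0 : g ≠ 0 := left_ne_zero_of_mul (b := h) <| by
    simpa [hgh] using X_pow_sub_C_ne_zero hn (1 : F)
  have hgX : g ∣ X ^ n - 1 := ⟨h, hgh.symm⟩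
  refine subset_antisymm (fun x hx => ?_) (cyclicCode_subset_dualCode hgh hrev)
  rw [mem_cyclicCode_iff_dvd ⟨g, by rw [← hgh, mul_comm]⟩, ← mul_dvd_mul_iff_left hg0, hgh]
  refine X_pow_sub_one_dvd_of_coeff_eq_zero hn hgX (dvd_mul_right _ _) ?_ fun k hdk hkn => ?_
  · have := ofFn_natDegree_lt hn x
    exact natDegree_mul_le.trans_lt (by omega)
  · exact coeff_mul_ofFn_eq_zero_of_mem_dualCode hgX hrev (ne_zero_of_reverse_eq_C_mul hg0 hrev) hx
      hdk hkn

end CyclicCode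

section CyclotomicGenerator

variable {F : Type} [Field F] {p ℓ : ℕ} [Fact p.Prime] [CharP F p] [Fact ℓ.Prime] {s i₁ i₂ : ℕ}

theorem X_sub_one_pow_mul_cyclotomic_pow_mul_compl (hi₁ : i₁ ≤ p ^ s) (hi₂ : i₂ ≤ p ^ s) :
    (X - 1) ^ i₁ * cyclotomic ℓ F ^ i₂ * ((X - 1) ^ (p ^ s - i₁) * cyclotomic ℓ F ^ (p ^ s - i₂)) =
      X ^ (ℓ * p ^ s) - 1 := by
  rw [mul_mul_mul_comm, ← pow_add, ← pow_add, Nat.add_sub_cancel' hi₁, Nat.add_sub_cancel' hi₂,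
    ← mul_pow, mul_comm (X - 1), cyclotomic_prime_mul_X_sub_one, sub_pow_char_pow, one_pow, pow_mul]

theorem dualCode_cyclicCode_X_sub_one_pow_mul_cyclotomic_pow (hi₁ : i₁ ≤ p ^ s)
    (hi₂ : i₂ ≤ p ^ s) :
    dualCode (cyclicCode F (ℓ * p ^ s) ((X - 1) ^ i₁ * cyclotomic ℓ F ^ i₂)) =
      cyclicCode F (ℓ * p ^ s) ((X - 1) ^ (p ^ s - i₁) * cyclotomic ℓ F ^ (p ^ s - i₂)) :=
  dualCode_cyclicCode (Nat.mul_pos (Fact.out : ℓ.Prime).pos (pow_pos (Fact.out : p.Prime).pos s))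
    (X_sub_one_pow_mul_cyclotomic_pow_mul_compl hi₁ hi₂)
    (reverse_X_sub_one_pow_mul_cyclotomic_pow ℓ i₁ i₂)

theorem dualCode_cyclicCode_X_sub_one_pow_mul_cyclotomic_pow_subset_iff (hℓ : (ℓ : F) ≠ 0)
    (hi₁ : i₁ ≤ p ^ s) (hi₂ : i₂ ≤ p ^ s) :
    dualCode (cyclicCode F (ℓ * p ^ s) ((X - 1) ^ i₁ * cyclotomic ℓ F ^ i₂)) ⊆
        cyclicCode F (ℓ * p ^ s) ((X - 1) ^ i₁ * cyclotomic ℓ F ^ i₂) ↔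
      2 * i₁ ≤ p ^ s ∧ 2 * i₂ ≤ p ^ s := by
  have hn : 0 < ℓ * p ^ s :=
    Nat.mul_pos (Fact.out : ℓ.Prime).pos (pow_pos (Fact.out : p.Prime).pos s)
  have hgh := X_sub_one_pow_mul_cyclotomic_pow_mul_compl (ℓ := ℓ) (F := F) hi₁ hi₂
  rw [dualCode_cyclicCode_X_sub_one_pow_mul_cyclotomic_pow hi₁ hi₂,
    cyclicCode_subset_cyclicCode_iff hn ⟨_, hgh.symm⟩,
    pow_mul_pow_dvd_pow_mul_pow_iff (isCoprime_X_sub_one_cyclotomic_prime ℓ hℓ)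
      (by simpa using not_isUnit_X_sub_C (1 : F))
      (not_isUnit_of_degree_pos _ (degree_cyclotomic_pos ℓ F (Fact.out : ℓ.Prime).pos))]
  omega

end CyclotomicGenerator

theorem stmt_18_general (p m q s : ℕ) (hp : p.Prime) (hp7 : 7 ≤ p) (hq : q = p ^ m)
    (F : Type) [Field F] [Fintype F] (hF : Fintype.card F = q)
    (i₁ i₂ : ℕ) (hi₁ : i₁ ≤ p ^ s) (hi₂ : i₂ ≤ p ^ s) :
    dualCode (cyclicCode F (5 * p ^ s)
        ((X - 1) ^ i₁ * (X ^ 4 + X ^ 3 + X ^ 2 + X + 1) ^ i₂)) =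
      cyclicCode F (5 * p ^ s)
        ((X - 1) ^ (p ^ s - i₁) * (X ^ 4 + X ^ 3 + X ^ 2 + X + 1) ^ (p ^ s - i₂)) ∧
    (dualCode (cyclicCode F (5 * p ^ s)
          ((X - 1) ^ i₁ * (X ^ 4 + X ^ 3 + X ^ 2 + X + 1) ^ i₂)) ⊆
        cyclicCode F (5 * p ^ s)
          ((X - 1) ^ i₁ * (X ^ 4 + X ^ 3 + X ^ 2 + X + 1) ^ i₂) ↔
      i₁ ≤ (p ^ s - 1) / 2 ∧ i₂ ≤ (p ^ s - 1) / 2) := by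
  have := Fact.mk hp
  have := Fact.mk Nat.prime_five
  have : CharP F p := charP_of_card_eq_prime_pow (hF.trans hq)
  have hΦ : (X ^ 4 + X ^ 3 + X ^ 2 + X + 1 : F[X]) = cyclotomic 5 F := by
    simp only [cyclotomic_prime, Finset.sum_range_succ, Finset.sum_range_zero]
    ring
  have h5 : ((5 : ℕ) : F) ≠ 0 := by
    rw [Ne, CharP.cast_eq_zero_iff F p]
    intro h
    have := Nat.le_of_dvd (by norm_num) h
    omega
  obtain ⟨k, hk⟩ := (hp.odd_of_ne_two (by omega)).pow (n := s)
  rw [hΦ, dualCode_cyclicCode_X_sub_one_pow_mul_cyclotomic_pow_subset_iff h5 hi₁ hi₂]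
  exact ⟨dualCode_cyclicCode_X_sub_one_pow_mul_cyclotomic_pow hi₁ hi₂, by omega⟩

theorem stmt_18 (p m q s : ℕ) (hp : p.Prime) (hp7 : 7 ≤ p) (hm : 0 < m) (hq : q = p ^ m)
    (hs : 1 ≤ s) (h5 : ¬ (5 ∣ q ^ 2 - 1))
    (F : Type) [Field F] [Fintype F] [DecidableEq F] (hF : Fintype.card F = q)
    (i₁ i₂ : ℕ) (hi₁ : i₁ ≤ p ^ s) (hi₂ : i₂ ≤ p ^ s) :
    dualCode (cyclicCode F (5 * p ^ s)
        ((X - 1) ^ i₁ * (X ^ 4 + X ^ 3 + X ^ 2 + X + 1) ^ i₂)) =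
      cyclicCode F (5 * p ^ s)
        ((X - 1) ^ (p ^ s - i₁) * (X ^ 4 + X ^ 3 + X ^ 2 + X + 1) ^ (p ^ s - i₂)) ∧
    (dualCode (cyclicCode F (5 * p ^ s)
          ((X - 1) ^ i₁ * (X ^ 4 + X ^ 3 + X ^ 2 + X + 1) ^ i₂)) ⊆
        cyclicCode F (5 * p ^ s)
          ((X - 1) ^ i₁ * (X ^ 4 + X ^ 3 + X ^ 2 + X + 1) ^ i₂) ↔
      i₁ ≤ (p ^ s - 1) / 2 ∧ i₂ ≤ (p ^ s - 1) / 2) :=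
  stmt_18_general p m q s hp hp7 hq F hF i₁ i₂ hi₁ hi₂
end
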